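/- arXiv:1002.0312 — 6 statements merged into one kernel-verified Lean document; each statement's English description precedes it below -/
import Mathlib

section
/- Let A be a nonzero normed algebra over ℂ (not necessarily associative, unital, or complete). If A contains no nonzero left topological linear zero divisor and contains at least one left linearly invertible element, then A is isomorphic as a ℂ-algebra to ℂ. -/
/-!
If `b ≠ 0` then `L_b : x ↦ b x` is bounded below, for otherwise `b` would be a left topological
zero divisor. Extend every `L_b` to the completion `Â` of `A`. On the Banach space `Â` the
invertible operators form an open set, and a bounded-below limit of invertible operators is
invertible; as `A ∖ {0}` is connected and `L̂_a` is invertible (it is bounded below with dense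
range), every `L̂_b` with `b ≠ 0` is invertible. Now run the Gelfand–Mazur argument: for `λ` in the
spectrum of `L̂_x L̂_a⁻¹` the operator `L̂_{λa - x}` is not invertible, so `x = λa`. Thus `A = ℂa`,
and a one-dimensional algebra with nonzero product is isomorphic to `ℂ`.
-/

open Filter Topology UniformSpace

theorem LinearMap.exists_pos_mul_norm_le_of_not_tendsto_zero {𝕜 E F : Type*} [RCLike 𝕜]
    [NormedAddCommGroup E] [NormedSpace 𝕜 E] [SeminormedAddCommGroup F] [NormedSpace 𝕜 F]
    (f : E →ₗ[𝕜] F)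
    (hf : ∀ x : ℕ → E, (∀ n, ‖x n‖ = 1) → ¬Tendsto (fun n => f (x n)) atTop (𝓝 0)) :
    ∃ c > 0, ∀ x, c * ‖x‖ ≤ ‖f x‖ := by
  by_contra! h
  have hseq : ∀ n : ℕ, ∃ u : E, ‖u‖ = 1 ∧ ‖f u‖ < 1 / (n + 1) := by
    intro n
    obtain ⟨x, hx⟩ := h (1 / (n + 1)) (by positivity)
    have hx0 : x ≠ 0 := by rintro rfl; simp at hx
    refine ⟨(‖x‖⁻¹ : 𝕜) • x, norm_smul_inv_norm hx0, ?_⟩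
    rw [map_smul, norm_smul, norm_inv, RCLike.norm_ofReal, abs_norm,
      inv_mul_lt_iff₀ (norm_pos_iff.2 hx0), mul_comm]
    exact hx
  choose u hu1 hu2 using hseq
  refine hf u hu1 (tendsto_zero_iff_norm_tendsto_zero.2 ?_)
  exact squeeze_zero (fun n => norm_nonneg _) (fun n => (hu2 n).le)
    tendsto_one_div_add_atTop_nhds_zero_nat

namespace UniformSpace.Completion

variable {𝕜 E F : Type*} [NontriviallyNormedField 𝕜] [NormedAddCommGroup E] [NormedSpace 𝕜 E]
  [NormedAddCommGroup F] [NormedSpace 𝕜 F]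

theorem continuousLinearMap_ext {f g : Completion E →L[𝕜] F} (h : ∀ x : E, f x = g x) : f = g :=
  ContinuousLinearMap.coeFn_injective (Completion.ext f.continuous g.continuous h)

theorem extend_toComplL_coe (f : E →L[𝕜] F) (x : E) :
    (toComplL.comp f).extend (toComplL : E →L[𝕜] Completion E) x = f x :=
  ContinuousLinearMap.extend_eq _ denseRange_coe (isUniformInducing_coe E) x

noncomputable def mapCLM : (E →L[𝕜] F) →L[𝕜] (Completion E →L[𝕜] Completion F) :=
  LinearMap.mkContinuous
    { toFun := fun f => (toComplL.comp f).extend toComplL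
      map_add' := fun f g => continuousLinearMap_ext fun x => by
        simp only [add_apply, extend_toComplL_coe, coe_add]
      map_smul' := fun s f => continuousLinearMap_ext fun x => by
        simp only [smul_apply, extend_toComplL_coe, RingHom.id_apply, coe_smul] }
    1 fun f => by
      refine (ContinuousLinearMap.opNorm_extend_le _ denseRange_coe (N := 1)
        fun x => by simp [norm_coe]).trans ?_
      rw [NNReal.coe_one, one_mul]
      exact ContinuousLinearMap.opNorm_le_bound _ (by positivity) fun x => by
        simpa [norm_coe] using f.le_opNorm x

theorem mapCLM_coe (f : E →L[𝕜] F) (x : E) : mapCLM f x = f x :=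
  extend_toComplL_coe f x

theorem mul_norm_le_norm_mapCLM {f : E →L[𝕜] F} {c : ℝ} (hf : ∀ x, c * ‖x‖ ≤ ‖f x‖)
    (y : Completion E) : c * ‖y‖ ≤ ‖mapCLM f y‖ :=
  induction_on y (isClosed_le (by fun_prop) (by fun_prop)) fun x => by
    simpa only [mapCLM_coe, norm_coe] using hf x

theorem denseRange_mapCLM {f : E →L[𝕜] F} (hf : Function.Surjective f) :
    DenseRange (mapCLM f) :=
  denseRange_coe.mono <| by
    rintro _ ⟨x, rfl⟩
    obtain ⟨y, rfl⟩ := hf x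
    exact ⟨y, mapCLM_coe f y⟩

end UniformSpace.Completion

namespace ContinuousLinearMap

variable {𝕜 E : Type*} [NontriviallyNormedField 𝕜] [NormedAddCommGroup E] [NormedSpace 𝕜 E]
  {c : ℝ}

theorem norm_inv_le_of_mul_norm_le (U : (E →L[𝕜] E)ˣ) (hc : 0 < c)
    (hU : ∀ x, c * ‖x‖ ≤ ‖(U : E →L[𝕜] E) x‖) : ‖(↑U⁻¹ : E →L[𝕜] E)‖ ≤ c⁻¹ :=
  opNorm_le_bound _ (inv_nonneg.2 hc.le) fun y => by
    have hy := hU ((↑U⁻¹ : E →L[𝕜] E) y)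
    rw [show (U : E →L[𝕜] E) ((↑U⁻¹ : E →L[𝕜] E) y) = y from
      congrArg (fun T : E →L[𝕜] E => T y) U.mul_inv] at hy
    rw [inv_mul_eq_div, le_div_iff₀ hc, mul_comm]
    exact hy

variable [CompleteSpace E]

theorem isUnit_of_mul_norm_le_of_denseRange {T : E →L[𝕜] E} (hc : 0 < c)
    (hT : ∀ x, c * ‖x‖ ≤ ‖T x‖) (hd : DenseRange T) : IsUnit T := by
  have hanti : AntilipschitzWith c⁻¹.toNNReal T :=
    T.antilipschitz_of_bound fun x => by
      rw [Real.coe_toNNReal _ (inv_nonneg.2 hc.le), inv_mul_eq_div, le_div_iff₀ hc, mul_comm]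
      exact hT x
  have hrange : Set.range T = Set.univ :=
    (hanti.isClosed_range T.uniformContinuous).closure_eq.symm.trans hd.closure_eq
  exact isUnit_iff_bijective.2 ⟨hanti.injective, Set.range_eq_univ.1 hrange⟩

theorem isUnit_of_mem_closure_of_mul_norm_le {S : E →L[𝕜] E}
    (hS : S ∈ closure {T : E →L[𝕜] E | IsUnit T}) (hc : 0 < c)
    (hSc : ∀ x, c * ‖x‖ ≤ ‖S x‖) : IsUnit S := by
  obtain ⟨_, ⟨U, rfl⟩, hSU⟩ := Metric.mem_closure_iff.1 hS (c / 2) (by positivity)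
  rw [dist_eq_norm] at hSU
  have hU : ∀ x, c / 2 * ‖x‖ ≤ ‖(U : E →L[𝕜] E) x‖ := fun x => by
    have hdiff : ‖(S - U) x‖ ≤ c / 2 * ‖x‖ :=
      ((S - U).le_opNorm x).trans (mul_le_mul_of_nonneg_right hSU.le (norm_nonneg x))
    have htri := norm_sub_norm_le (S x) ((U : E →L[𝕜] E) x)
    rw [← sub_apply] at htri
    linarith [hSc x]
  have hsmall : ‖(↑U⁻¹ : E →L[𝕜] E) * (U - S)‖ < 1 :=
    calc ‖(↑U⁻¹ : E →L[𝕜] E) * (U - S)‖ ≤ ‖(↑U⁻¹ : E →L[𝕜] E)‖ * ‖(U : E →L[𝕜] E) - S‖ :=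
          norm_mul_le _ _
      _ ≤ (c / 2)⁻¹ * ‖(U : E →L[𝕜] E) - S‖ :=
          mul_le_mul_of_nonneg_right (norm_inv_le_of_mul_norm_le U (by positivity) hU)
            (norm_nonneg _)
      _ < (c / 2)⁻¹ * (c / 2) := by
          rw [norm_sub_rev]; exact mul_lt_mul_of_pos_left hSU (by positivity)
      _ = 1 := inv_mul_cancel₀ (by positivity)
  have hfactor : S = U * (1 - ↑U⁻¹ * (U - S)) := by
    rw [mul_sub, mul_one, ← mul_assoc, U.mul_inv, one_mul, sub_sub_cancel]
  rw [hfactor]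
  exact U.isUnit.mul (Units.oneSub _ hsmall).isUnit

end ContinuousLinearMap

theorem one_lt_rank_real_of_complex (A : Type*) [AddCommGroup A] [Module ℂ A] [Nontrivial A] :
    1 < Module.rank ℝ A := by
  rw [rank_real_of_complex]
  exact Nat.one_lt_ofNat.trans_le (le_mul_of_one_le_right' (Cardinal.one_le_iff_pos.2 rank_pos))

theorem ContinuousLinearMap.isUnit_apply_of_ne_zero {A E : Type*} [NormedAddCommGroup A]
    [NormedSpace ℂ A] [NormedAddCommGroup E] [NormedSpace ℂ E] [CompleteSpace E]
    (L : A →L[ℂ] E →L[ℂ] E) (hL : ∀ b ≠ 0, ∃ c > 0, ∀ y, c * ‖y‖ ≤ ‖L b y‖) {a : A}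
    (ha : a ≠ 0) (hLa : IsUnit (L a)) {b : A} (hb : b ≠ 0) : IsUnit (L b) := by
  have : Nontrivial A := ⟨⟨a, 0, ha⟩⟩
  have hconn : IsPreconnected ({0}ᶜ : Set A) :=
    (isConnected_compl_singleton_of_one_lt_rank (one_lt_rank_real_of_complex A) 0).isPreconnected
  refine hconn.subset_of_closure_inter_subset (u := L ⁻¹' {T | IsUnit T})
    (Units.isOpen.preimage L.continuous) ⟨a, ha, hLa⟩ ?_ hb
  rintro b ⟨hbu, hb⟩
  obtain ⟨c, hc, hbc⟩ := hL b hb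
  exact isUnit_of_mem_closure_of_mul_norm_le (L.continuous.closure_preimage_subset _ hbu) hc hbc

theorem exists_smul_eq_of_isUnit_apply {A R : Type*} [AddCommGroup A] [Module ℂ A] [NormedRing R]
    [NormedAlgebra ℂ R] [CompleteSpace R] [Nontrivial R] (L : A →ₗ[ℂ] R)
    (hL : ∀ b ≠ 0, IsUnit (L b)) {a : A} (ha : a ≠ 0) (x : A) : ∃ s : ℂ, s • a = x := by
  obtain ⟨u, hu⟩ := hL a ha
  obtain ⟨s, hs⟩ := spectrum.nonempty (L x * ↑u⁻¹)
  refine ⟨s, by_contra fun hne => spectrum.mem_iff.1 hs ?_⟩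
  have hfactor : algebraMap ℂ R s - L x * ↑u⁻¹ = L (s • a - x) * ↑u⁻¹ := by
    rw [map_sub, map_smul, ← hu, sub_mul, smul_mul_assoc, u.mul_inv,
      Algebra.algebraMap_eq_smul_one]
  rw [hfactor]
  exact (hL _ (sub_ne_zero.2 hne)).mul u⁻¹.isUnit

theorem exists_linearEquiv_mul_eq_of_forall_smul_eq {K A : Type*} [Field K] [AddCommGroup A]
    [Module K A] (m : A →ₗ[K] A →ₗ[K] A) {a : A} (ha : a ≠ 0) (hspan : ∀ x, ∃ s : K, s • a = x)
    (hm : m a a ≠ 0) : ∃ e : A ≃ₗ[K] K, ∀ x y, e (m x y) = e x * e y := by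
  let f : K ≃ₗ[K] A :=
    LinearEquiv.ofBijective (LinearMap.toSpanSingleton K A a) ⟨smul_left_injective K ha, hspan⟩
  have hf : f.symm a = 1 := by
    rw [← one_smul K a]
    exact f.symm_apply_apply 1
  obtain ⟨μ, hμ⟩ := hspan (m a a)
  have hμ0 : μ ≠ 0 := by rintro rfl; exact hm (by simpa using hμ.symm)
  -- With `m a a = μ • a`, the coordinate along `a` becomes multiplicative once scaled by `μ`.
  refine ⟨f.symm ≪≫ₗ LinearEquiv.smulOfNeZero K K μ hμ0, fun x y => ?_⟩
  obtain ⟨s, rfl⟩ := hspan x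
  obtain ⟨t, rfl⟩ := hspan y
  simp only [map_smul, LinearMap.smul_apply, ← hμ, smul_smul, LinearEquiv.trans_apply, hf,
    LinearEquiv.smulOfNeZero_apply, smul_eq_mul, mul_one]
  ring

theorem normed_complex_algebra_no_left_tlzd_with_left_inv_iso_complex
    {A : Type*} [NormedAddCommGroup A] [NormedSpace ℂ A] [Nontrivial A]
    (m : A →ₗ[ℂ] A →ₗ[ℂ] A)
    (hnorm : ∀ x y : A, ‖m x y‖ ≤ ‖x‖ * ‖y‖)
    (hnotlzd : ∀ a : A,
      (∃ x : ℕ → A, (∀ n, ‖x n‖ = 1) ∧ Tendsto (fun n => m a (x n)) atTop (𝓝 0)) → a = 0)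
    (hinv : ∃ a : A, Function.Bijective (fun x => m a x)) :
    ∃ e : A ≃ₗ[ℂ] ℂ, ∀ x y : A, e (m x y) = e x * e y := by
  obtain ⟨a, ha⟩ := hinv
  have ha0 : a ≠ 0 := by
    rintro rfl
    obtain ⟨x, hx⟩ := exists_ne (0 : A)
    exact hx (ha.injective (by simp))
  let M : A →L[ℂ] A →L[ℂ] A := m.mkContinuous₂ 1 (by simpa using hnorm)
  let L := Completion.mapCLM.comp M
  have hbelow : ∀ b ≠ 0, ∃ c > 0, ∀ y, c * ‖y‖ ≤ ‖L b y‖ := fun b hb => by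
    obtain ⟨c, hc, hbc⟩ := (m b).exists_pos_mul_norm_le_of_not_tendsto_zero
      fun x hx hx0 => hb (hnotlzd b ⟨x, hx, hx0⟩)
    exact ⟨c, hc, Completion.mul_norm_le_norm_mapCLM (f := M b) hbc⟩
  have hLa : IsUnit (L a) := by
    obtain ⟨c, hc, hac⟩ := hbelow a ha0
    exact ContinuousLinearMap.isUnit_of_mul_norm_le_of_denseRange hc hac
      (Completion.denseRange_mapCLM (f := M a) ha.surjective)
  have : Nontrivial (Completion A) := (Completion.coe_injective (α := A)).nontrivial
  have hspan := exists_smul_eq_of_isUnit_apply L.toLinearMap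
    (fun b hb => L.isUnit_apply_of_ne_zero hbelow ha0 hLa hb) ha0
  exact exists_linearEquiv_mul_eq_of_forall_smul_eq m ha0 hspan
    fun h => ha0 (ha.injective (by simpa using h))
end

section
/- Let A be a normed algebra over ℂ of left linear division such that the set of left topological linear zero divisors of A, with the metric induced by the norm, is a complete subset of A. Then A is isomorphic as a ℂ-algebra to ℂ. -/
/-!
Write `L a x = m a x` and let `(L a).lowerBound` be the infimum of `‖m a x‖` over unit vectors
`x`, so that the left topological zero divisors are the `a` with `(L a).lowerBound = 0`.

If `(L b).lowerBound > 0`, then for every `a` some `a - t • b` is a left topological zero divisor: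
otherwise every `L a - t • L b` is a bounded-below bijection, hence a unit of `A →L[ℂ] A`, and
`t ↦ (L a - t • L b)⁻¹` is an entire function tending to `0` at infinity, which contradicts
Liouville's theorem. A Cauchy sequence in `A` therefore splits into a sequence of zero divisors
plus a bounded multiple of `b`, so completeness of the zero divisors makes `A` complete. The open
mapping theorem then bounds every nonzero `L a` from below, so `0` is the only zero divisor and
`A = ℂ • b`. If `m b b = κ • b`, then `s • b ↦ κ s` is the required isomorphism onto `ℂ`.
-/

open Filter Topology Metric Function
open scoped Ring

theorem completeSpace_of_isComplete_of_forall_sub_smul_mem {𝕜 E : Type*}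
    [NormedField 𝕜] [ProperSpace 𝕜] [NormedAddCommGroup E] [NormedSpace 𝕜 E]
    {Z : Set E} (hZ : IsComplete Z) (b : E) (C : ℝ)
    (h : ∀ a : E, ∃ t : 𝕜, a - t • b ∈ Z ∧ ‖t‖ ≤ C * ‖a‖) : CompleteSpace E := by
  refine Metric.complete_of_cauchySeq_tendsto fun u hu => ?_
  choose t htZ htC using fun n => h (u n)
  obtain ⟨R, hR⟩ := isBounded_iff_forall_norm_le.1 hu.isBounded_range
  have ht : ∀ n, t n ∈ closedBall (0 : 𝕜) (|C| * R) := fun n => by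
    rw [mem_closedBall_zero_iff]
    exact (htC n).trans
      (mul_le_mul (le_abs_self C) (hR _ ⟨n, rfl⟩) (norm_nonneg _) (abs_nonneg C))
  obtain ⟨l, -, φ, hφ, htl⟩ := tendsto_subseq_of_bounded isBounded_closedBall ht
  have hzc : CauchySeq fun n => u (φ n) - t (φ n) • b :=
    uniformContinuous_sub.comp_cauchySeq
      ((hu.comp_tendsto hφ.tendsto_atTop).prodMk (htl.smul_const b).cauchySeq)
  obtain ⟨z, -, hz⟩ := cauchySeq_tendsto_of_isComplete hZ (fun n => htZ (φ n)) hzc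
  refine ⟨z + l • b, tendsto_nhds_of_cauchySeq_of_subseq hu hφ.tendsto_atTop ?_⟩
  simpa [comp_def] using hz.add (htl.smul_const b)

theorem exists_linearEquiv_map_mul_of_forall_eq_smul {𝕜 A : Type*} [Field 𝕜] [AddCommGroup A]
    [Module 𝕜 A]
    (m : A →ₗ[𝕜] A →ₗ[𝕜] A) {b : A} (hb : b ≠ 0) (hspan : ∀ a : A, ∃ t : 𝕜, a = t • b)
    (hbb : m b b ≠ 0) : ∃ e : A ≃ₗ[𝕜] 𝕜, ∀ x y : A, e (m x y) = e x * e y := by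
  obtain ⟨κ, hκ⟩ := hspan (m b b)
  have hκ0 : κ ≠ 0 := by rintro rfl; exact hbb (by simpa using hκ)
  let ψ := LinearEquiv.ofBijective (LinearMap.toSpanSingleton 𝕜 A b)
    ⟨smul_left_injective 𝕜 hb, fun a => (hspan a).imp fun _ ht => ht.symm⟩
  have hψ : ψ.symm b = 1 := ψ.symm_apply_eq.2 (one_smul 𝕜 b).symm
  refine ⟨ψ.symm.trans (LinearEquiv.smulOfNeZero 𝕜 𝕜 κ hκ0), fun x y => ?_⟩
  obtain ⟨s, rfl⟩ := hspan x
  obtain ⟨t, rfl⟩ := hspan y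
  simp [hψ, hκ, smul_smul]
  ring

namespace ContinuousLinearMap

section LowerBound

variable {𝕜 E F : Type*} [RCLike 𝕜] [NormedAddCommGroup E] [NormedSpace 𝕜 E]
  [NormedAddCommGroup F] [NormedSpace 𝕜 F]

noncomputable def lowerBound (f : E →L[𝕜] F) : ℝ := sInf ((fun x => ‖f x‖) '' sphere 0 1)

theorem lowerBound_nonneg (f : E →L[𝕜] F) : 0 ≤ f.lowerBound :=
  Real.sInf_nonneg (by rintro _ ⟨x, -, rfl⟩; exact norm_nonneg _)

theorem lowerBound_le (f : E →L[𝕜] F) {x : E} (hx : ‖x‖ = 1) : f.lowerBound ≤ ‖f x‖ :=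
  csInf_le ⟨0, by rintro _ ⟨y, -, rfl⟩; exact norm_nonneg _⟩
    ⟨x, mem_sphere_zero_iff_norm.2 hx, rfl⟩

theorem le_lowerBound [Nontrivial E] (f : E →L[𝕜] F) {r : ℝ}
    (h : ∀ x : E, ‖x‖ = 1 → r ≤ ‖f x‖) : r ≤ f.lowerBound :=
  le_csInf ((Set.nonempty_coe_sort.1 (NormedSpace.sphere_nonempty_rclike 𝕜 zero_le_one)).image _)
    (by rintro _ ⟨x, hx, rfl⟩; exact h x (mem_sphere_zero_iff_norm.1 hx))

theorem lowerBound_mul_norm_le (f : E →L[𝕜] F) (x : E) : f.lowerBound * ‖x‖ ≤ ‖f x‖ := by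
  rcases eq_or_ne x 0 with rfl | hx
  · simp
  have hx' : 0 < ‖x‖ := norm_pos_iff.2 hx
  have h := f.lowerBound_le (norm_smul_inv_norm (𝕜 := 𝕜) hx)
  rw [map_smul, norm_smul, norm_inv, RCLike.norm_ofReal, abs_norm] at h
  rwa [← le_div_iff₀ hx', div_eq_inv_mul]

@[simp]
theorem lowerBound_zero [Nontrivial E] : (0 : E →L[𝕜] F).lowerBound = 0 := by
  obtain ⟨x, hx⟩ := NormedSpace.sphere_nonempty_rclike 𝕜 (E := E) zero_le_one
  refine le_antisymm ?_ (lowerBound_nonneg 0)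
  simpa using (0 : E →L[𝕜] F).lowerBound_le (mem_sphere_zero_iff_norm.1 hx)

@[simp]
theorem lowerBound_neg (f : E →L[𝕜] F) : (-f).lowerBound = f.lowerBound := by
  simp [lowerBound]

theorem lowerBound_le_add_norm_sub [Nontrivial E] (f g : E →L[𝕜] F) :
    f.lowerBound ≤ g.lowerBound + ‖f - g‖ := by
  rw [← sub_le_iff_le_add]
  refine g.le_lowerBound fun x hx => ?_
  have h := (f - g).le_opNorm x
  rw [hx, mul_one, sub_apply] at h
  linarith [f.lowerBound_le hx, norm_le_norm_add_norm_sub' (f x) (g x), norm_sub_rev (f x) (g x)]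

theorem lipschitzWith_lowerBound [Nontrivial E] :
    LipschitzWith 1 (lowerBound : (E →L[𝕜] F) → ℝ) :=
  LipschitzWith.of_le_add fun f g => by
    simpa [dist_eq_norm] using lowerBound_le_add_norm_sub f g

theorem lowerBound_smul (c : 𝕜) (f : E →L[𝕜] F) :
    (c • f).lowerBound = ‖c‖ * f.lowerBound := by
  simp only [lowerBound, smul_apply, norm_smul]
  rw [← smul_eq_mul, ← Real.sInf_smul_of_nonneg (norm_nonneg c), ← Set.image_smul, Set.image_image]
  rfl

theorem norm_mul_lowerBound_sub_norm_le [Nontrivial E] (S T : E →L[𝕜] F) (c : 𝕜) :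
    ‖c‖ * T.lowerBound - ‖S‖ ≤ (S - c • T).lowerBound := by
  have h := lowerBound_le_add_norm_sub (c • T) (c • T - S)
  rw [sub_sub_cancel, ← neg_sub, lowerBound_neg, lowerBound_smul] at h
  linarith

theorem lowerBound_eq_zero_iff [Nontrivial E] (f : E →L[𝕜] F) :
    f.lowerBound = 0 ↔
      ∃ x : ℕ → E, (∀ n, ‖x n‖ = 1) ∧ Tendsto (fun n => f (x n)) atTop (𝓝 0) := by
  constructor
  · intro h
    have : ∀ n : ℕ, ∃ x : E, ‖x‖ = 1 ∧ ‖f x‖ < 1 / (n + 1) := by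
      intro n
      have : f.lowerBound < 1 / (n + 1) := by rw [h]; positivity
      obtain ⟨_, ⟨x, hx, rfl⟩, hlt⟩ := exists_lt_of_csInf_lt
        ((Set.nonempty_coe_sort.1 (NormedSpace.sphere_nonempty_rclike 𝕜 zero_le_one)).image _)
        this
      exact ⟨x, mem_sphere_zero_iff_norm.1 hx, hlt⟩
    choose x hx hfx using this
    refine ⟨x, hx, squeeze_zero_norm (fun n => (hfx n).le) ?_⟩
    exact tendsto_one_div_add_atTop_nhds_zero_nat
  · rintro ⟨x, hx, hfx⟩
    refine le_antisymm ?_ f.lowerBound_nonneg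
    exact ge_of_tendsto (by simpa using hfx.norm)
      (Eventually.of_forall fun n => f.lowerBound_le (hx n))

end LowerBound

section Units

variable {𝕜 E : Type*} [RCLike 𝕜] [NormedAddCommGroup E] [NormedSpace 𝕜 E]

theorem lowerBound_pos_of_isUnit [Nontrivial E] {u : E →L[𝕜] E} (hu : IsUnit u) :
    0 < u.lowerBound := by
  have hinv : 0 < ‖u⁻¹ʳ‖ := norm_pos_iff.2 hu.ringInverse.ne_zero
  refine (inv_pos.2 hinv).trans_le (u.le_lowerBound fun x hx => ?_)
  rw [inv_le_iff_one_le_mul₀' hinv]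
  calc 1 = ‖u⁻¹ʳ (u x)‖ := by
        rw [← mul_apply_eq_comp, Ring.inverse_mul_cancel u hu, one_apply_eq_self, hx]
    _ ≤ ‖u⁻¹ʳ‖ * ‖u x‖ := le_opNorm _ _

theorem norm_ringInverse_le {u : E →L[𝕜] E} (hu : IsUnit u) (h : 0 < u.lowerBound) :
    ‖u⁻¹ʳ‖ ≤ u.lowerBound⁻¹ := by
  refine opNorm_le_bound _ (inv_nonneg.2 h.le) fun y => ?_
  rw [inv_mul_eq_div, le_div_iff₀' h]
  simpa [← mul_apply_eq_comp, Ring.mul_inverse_cancel u hu] using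
    u.lowerBound_mul_norm_le (u⁻¹ʳ y)

theorem isUnit_of_bijective_of_lowerBound_pos {u : E →L[𝕜] E} (hu : Bijective u)
    (h : 0 < u.lowerBound) : IsUnit u := by
  let e₀ := LinearEquiv.ofBijective (u : E →ₗ[𝕜] E) hu
  let e := e₀.toContinuousLinearEquivOfBounds ‖u‖ u.lowerBound⁻¹ u.le_opNorm fun y => by
    rw [inv_mul_eq_div, le_div_iff₀' h]
    have := u.lowerBound_mul_norm_le (e₀.symm y)
    rwa [show u (e₀.symm y) = y from e₀.apply_symm_apply y] at this
  exact ⟨e.toUnit, rfl⟩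

end Units

section Pencil

variable {E : Type*} [NormedAddCommGroup E] [NormedSpace ℂ E] [Nontrivial E] (S T : E →L[ℂ] E)

theorem tendsto_ringInverse_sub_smul_cocompact (hT : 0 < T.lowerBound) :
    Tendsto (fun t : ℂ => (S - t • T)⁻¹ʳ) (cocompact ℂ) (𝓝 0) := by
  have hlb : Tendsto (fun t : ℂ => ‖t‖ * T.lowerBound - ‖S‖) (cocompact ℂ) atTop :=
    tendsto_atTop_add_const_right _ _ (tendsto_norm_cocompact_atTop.atTop_mul_const hT)
  refine squeeze_zero_norm' ?_ hlb.inv_tendsto_atTop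
  filter_upwards [hlb.eventually_gt_atTop 0] with t ht
  -- `Ring.inverse` is `0` at non-units, so only the units need the bound.
  by_cases hu : IsUnit (S - t • T)
  · have h := norm_mul_lowerBound_sub_norm_le S T t
    exact (norm_ringInverse_le hu (ht.trans_le h)).trans (inv_anti₀ ht h)
  · simp [Ring.inverse_non_unit _ hu, ht.le]

theorem continuous_ringInverse_sub_smul (hU : ∀ t : ℂ, IsUnit (S - t • T)) :
    Continuous fun t : ℂ => (S - t • T)⁻¹ʳ := by
  set R := fun t : ℂ => (S - t • T)⁻¹ʳ
  have hlb : ∀ t : ℂ, 0 < (S - t • T).lowerBound := fun t => lowerBound_pos_of_isUnit (hU t)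
  have hcont : Continuous fun t : ℂ => (S - t • T).lowerBound :=
    lipschitzWith_lowerBound.continuous.comp (by fun_prop)
  refine continuous_iff_continuousAt.2 fun s => tendsto_iff_norm_sub_tendsto_zero.2 ?_
  have hle : ∀ t, ‖R t - R s‖ ≤ (S - t • T).lowerBound⁻¹ * (‖t - s‖ * ‖T‖) * ‖R s‖ := by
    intro t
    rw [Ring.inverse_sub_inverse (iff_of_true (hU t) (hU s)),
      show S - s • T - (S - t • T) = (t - s) • T by module]
    calc ‖R t * ((t - s) • T) * R s‖ ≤ ‖R t‖ * (‖t - s‖ * ‖T‖) * ‖R s‖ := by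
          grw [norm_mul_le, norm_mul_le, norm_smul]
      _ ≤ (S - t • T).lowerBound⁻¹ * (‖t - s‖ * ‖T‖) * ‖R s‖ := by
          grw [norm_ringInverse_le (hU t) (hlb t)]
  have hbound : Continuous fun t : ℂ => (S - t • T).lowerBound⁻¹ * (‖t - s‖ * ‖T‖) * ‖R s‖ :=
    ((hcont.inv₀ fun t => (hlb t).ne').mul (by fun_prop)).mul continuous_const
  exact squeeze_zero (fun _ => norm_nonneg _) hle (by simpa using hbound.tendsto s)

theorem hasDerivAt_ringInverse_sub_smul (hU : ∀ t : ℂ, IsUnit (S - t • T)) (s : ℂ) :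
    HasDerivAt (fun t : ℂ => (S - t • T)⁻¹ʳ) ((S - s • T)⁻¹ʳ * T * (S - s • T)⁻¹ʳ) s := by
  set R := fun t : ℂ => (S - t • T)⁻¹ʳ
  have hslope : ∀ t ≠ s, slope R s t = R t * T * R s := by
    intro t ht
    rw [slope_def_module, Ring.inverse_sub_inverse (iff_of_true (hU t) (hU s)),
      show S - s • T - (S - t • T) = (t - s) • T by module, mul_smul_comm, smul_mul_assoc,
      smul_smul, inv_mul_cancel₀ (sub_ne_zero.2 ht), one_smul]
  rw [hasDerivAt_iff_tendsto_slope]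
  have hR := continuous_ringInverse_sub_smul S T hU
  refine ((((hR.mul continuous_const).mul continuous_const).tendsto s).mono_left
    nhdsWithin_le_nhds).congr' ?_
  filter_upwards [self_mem_nhdsWithin] with t ht using (hslope t ht).symm

theorem exists_not_isUnit_sub_smul (hT : 0 < T.lowerBound) : ∃ t : ℂ, ¬IsUnit (S - t • T) := by
  by_contra! hU
  have hR : Differentiable ℂ fun t : ℂ => (S - t • T)⁻¹ʳ := fun s =>
    (hasDerivAt_ringInverse_sub_smul S T hU s).differentiableAt
  exact (hU 0).ringInverse.ne_zero
    (hR.apply_eq_of_tendsto_cocompact 0 (tendsto_ringInverse_sub_smul_cocompact S T hT))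

end Pencil

section LeftDivision

variable {A : Type*} [NormedAddCommGroup A] [NormedSpace ℂ A] [Nontrivial A]
  (L : A →L[ℂ] A →L[ℂ] A) (hL : ∀ a : A, a ≠ 0 → Bijective (L a))
include hL

theorem exists_lowerBound_sub_smul_eq_zero {b : A} (hb : 0 < (L b).lowerBound) (a : A) :
    ∃ t : ℂ, (L (a - t • b)).lowerBound = 0 := by
  obtain ⟨t, ht⟩ := (L a).exists_not_isUnit_sub_smul (L b) hb
  refine ⟨t, by_contra fun h => ht ?_⟩
  have hpos := (L (a - t • b)).lowerBound_nonneg.lt_of_ne' h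
  have hne : a - t • b ≠ 0 := by rintro h0; simp [h0] at hpos
  simpa using isUnit_of_bijective_of_lowerBound_pos (hL _ hne) hpos

theorem completeSpace_of_isComplete_lowerBound_eq_zero
    (hZ : IsComplete {a : A | (L a).lowerBound = 0}) : CompleteSpace A := by
  by_cases hall : ∀ a : A, (L a).lowerBound = 0
  · have hZ_univ : {a : A | (L a).lowerBound = 0} = Set.univ := Set.eq_univ_of_forall hall
    exact completeSpace_iff_isComplete_univ.2 (hZ_univ ▸ hZ)
  obtain ⟨b, hb⟩ := not_forall.1 hall
  replace hb := (L b).lowerBound_nonneg.lt_of_ne' hb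
  refine completeSpace_of_isComplete_of_forall_sub_smul_mem (𝕜 := ℂ) hZ b
    (‖L‖ / (L b).lowerBound) fun a => ?_
  obtain ⟨t, ht⟩ := exists_lowerBound_sub_smul_eq_zero L hL hb a
  refine ⟨t, ht, ?_⟩
  have h := norm_mul_lowerBound_sub_norm_le (L a) (L b) t
  rw [← map_smul, ← map_sub, ht] at h
  rw [div_mul_eq_mul_div, le_div_iff₀ hb]
  linarith [L.le_opNorm a]

theorem lowerBound_apply_pos [CompleteSpace A] {a : A} (ha : a ≠ 0) : 0 < (L a).lowerBound :=
  lowerBound_pos_of_isUnit ((L a).isUnit_iff_bijective.2 (hL a ha))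

theorem exists_eq_smul_of_isComplete_lowerBound_eq_zero
    (hZ : IsComplete {a : A | (L a).lowerBound = 0}) {b : A} (hb : b ≠ 0) (a : A) :
    ∃ t : ℂ, a = t • b := by
  have := completeSpace_of_isComplete_lowerBound_eq_zero L hL hZ
  obtain ⟨t, ht⟩ := exists_lowerBound_sub_smul_eq_zero L hL (lowerBound_apply_pos L hL hb) a
  by_contra! h
  exact (lowerBound_apply_pos L hL (sub_ne_zero.2 (h t))).ne' ht

end LeftDivision

end ContinuousLinearMap

theorem normed_complex_left_division_algebra_complete_tlzd_iso_complex
    {A : Type*} [NormedAddCommGroup A] [NormedSpace ℂ A] [Nontrivial A]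
    (m : A →ₗ[ℂ] A →ₗ[ℂ] A)
    (hnorm : ∀ x y : A, ‖m x y‖ ≤ ‖x‖ * ‖y‖)
    (hdiv : ∀ a : A, a ≠ 0 → Function.Bijective (fun x => m a x))
    (hcomplete : IsComplete {a : A |
      ∃ x : ℕ → A, (∀ n, ‖x n‖ = 1) ∧ Tendsto (fun n => m a (x n)) atTop (𝓝 0)}) :
    ∃ e : A ≃ₗ[ℂ] ℂ, ∀ x y : A, e (m x y) = e x * e y := by
  let L : A →L[ℂ] A →L[ℂ] A := m.mkContinuous₂ 1 fun x y => by simpa using hnorm x y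
  have hL : ∀ a : A, a ≠ 0 → Bijective (L a) := hdiv
  have hZ : IsComplete {a : A | (L a).lowerBound = 0} := by
    convert hcomplete using 3 with a
    exact (L a).lowerBound_eq_zero_iff
  obtain ⟨b, hb⟩ := exists_ne (0 : A)
  refine exists_linearEquiv_map_mul_of_forall_eq_smul m hb
    (L.exists_eq_smul_of_isComplete_lowerBound_eq_zero hL hZ hb) fun hbb => hb ?_
  exact (hdiv b hb).1 (by simpa using hbb)
end

section
/- Every noncommutative Jordan normed algebra over ℂ of left linear division is isomorphic as a ℂ-algebra to ℂ. -/
/-!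
Left division makes the algebra free of zero divisors. Solving `a u = a` for some `a ≠ 0`
produces a nonzero idempotent `u`, and the Peirce decomposition of `A` relative to `u` has
trivial `1/2`-space, which forces `u` to be a two-sided identity.

If some `x` were not a multiple of `u`, every `x - λ u` would be nonzero, so `u = (x - λ u) r(λ)`
has a solution `r(λ)`. The Jordan identity turns `r` into a pseudo-resolvent,
`r(μ) - r(λ) = (μ - λ) r(λ) r(μ)`, and submultiplicativity of the norm makes it an entire function
vanishing at infinity. By Liouville `r = 0`, contradicting `x r(0) = u`. Hence `A = ℂ u`.
-/

open Filter Topology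

section Algebraic

variable {K A : Type*} [Field K] [AddCommGroup A] [Module K A]

structure IsNoncommJordan (m : A →ₗ[K] A →ₗ[K] A) : Prop where
  flexible : ∀ x y, m (m x y) x = m x (m y x)
  jordan : ∀ x y, m (m (m x x) y) x = m (m x x) (m y x)

theorem eq_zero_or_eq_zero_of_injective_apply {m : A →ₗ[K] A →ₗ[K] A}
    (hinj : ∀ a : A, a ≠ 0 → Function.Injective (m a)) {a b : A} (h : m a b = 0) :
    a = 0 ∨ b = 0 :=
  or_iff_not_imp_left.mpr fun ha => hinj a ha (h.trans (map_zero (m a)).symm)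

theorem cancel_left_of_noZeroDivisors {m : A →ₗ[K] A →ₗ[K] A}
    (hzd : ∀ a b : A, m a b = 0 → a = 0 ∨ b = 0) {a s t : A} (ha : a ≠ 0)
    (h : m a s = m a t) : s = t :=
  sub_eq_zero.mp ((hzd a (s - t) (by rw [map_sub, h, sub_self])).resolve_left ha)

theorem cancel_right_of_noZeroDivisors {m : A →ₗ[K] A →ₗ[K] A}
    (hzd : ∀ a b : A, m a b = 0 → a = 0 ∨ b = 0) {a s t : A} (ha : a ≠ 0)
    (h : m s a = m t a) : s = t :=
  sub_eq_zero.mp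
    ((hzd (s - t) a (by rw [map_sub, LinearMap.sub_apply, h, sub_self])).resolve_right ha)

namespace IsNoncommJordan

variable {m : A →ₗ[K] A →ₗ[K] A}

theorem flexible_linearized (hJ : IsNoncommJordan m) (p y q : A) :
    m (m p y) q + m (m q y) p = m p (m y q) + m q (m y p) := by
  have h := hJ.flexible (p + q) y
  simp only [map_add, LinearMap.add_apply, hJ.flexible p y, hJ.flexible q y] at h
  linear_combination (norm := module) h

theorem jordan_linearized [NeZero (2 : K)] (hJ : IsNoncommJordan m) (x c y : A) :
    m (m (m x c + m c x) y) x + m (m (m x x) y) c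
      = m (m x c + m c x) (m y x) + m (m x x) (m y c) := by
  have hplus := hJ.jordan (x + c) y
  have hminus := hJ.jordan (x - c) y
  simp only [map_add, map_sub, LinearMap.add_apply, LinearMap.sub_apply] at hplus hminus ⊢
  rw [← sub_eq_zero, ← smul_right_inj (two_ne_zero (α := K)), smul_zero]
  linear_combination (norm := module) hplus - hminus - (2 : K) • hJ.jordan c y

theorem mul_self_eq_of_mul_eq_self [NeZero (2 : K)] (hJ : IsNoncommJordan m)
    (hzd : ∀ a b : A, m a b = 0 → a = 0 ∨ b = 0) {a u : A} (ha : a ≠ 0) (hau : m a u = a) :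
    m u u = u := by
  have hua : m u a = a :=
    cancel_left_of_noZeroDivisors hzd ha ((hJ.flexible a u).symm.trans (by rw [hau]))
  have ha2 : m a a ≠ 0 := fun h => ha ((hzd a a h).elim id id)
  have ha2u : m (m a a) u = m a a :=
    cancel_right_of_noZeroDivisors hzd ha (by rw [hJ.jordan a u, hua])
  have hassoc : m (m (m a a) u) u = m (m a a) (m u u) := by
    have h := hJ.jordan_linearized a u u
    simp only [hau, hua, map_add, LinearMap.add_apply] at h
    linear_combination (norm := module) h
  rw [ha2u, ha2u] at hassoc
  exact cancel_left_of_noZeroDivisors hzd ha2 (hassoc.symm.trans ha2u.symm)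

theorem idempotent_fixes_mul_add_mul_sub [NeZero (2 : K)] (hJ : IsNoncommJordan m)
    (hzd : ∀ a b : A, m a b = 0 → a = 0 ∨ b = 0) {u : A} (hu : u ≠ 0) (huu : m u u = u)
    (x : A) :
    m u (m u x + m x u - x) = m u x + m x u - x ∧
      m (m u x + m x u - x) u = m u x + m x u - x := by
  have hflex (w : A) : m u w - m u (m u w) + (m (m w u) u - m w u) = 0 := by
    have h := hJ.flexible_linearized u u w
    rw [huu] at h
    linear_combination (norm := module) h
  have hjordan : m u x - m u (m u x) + (m (m (m u x + m x u) u) u - m (m u x + m x u) u) = 0 := by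
    have h := hJ.jordan_linearized u x u
    rw [huu, huu] at h
    linear_combination (norm := module) h
  set s := m u x + m x u - x
  have hs : m u s - m u (m u s) = 0 := by
    have h := hflex (m u x + m x u)
    simp only [s, map_add, map_sub, LinearMap.add_apply] at h hjordan ⊢
    linear_combination (norm := module) h - hjordan
  have hus : m u s = s :=
    (cancel_left_of_noZeroDivisors hzd hu (sub_eq_zero.mp hs)).symm
  refine ⟨hus, cancel_right_of_noZeroDivisors hzd hu ?_⟩
  simpa [hs, sub_eq_zero] using hflex s

theorem eq_zero_of_idempotent_mul_add_mul_eq [NeZero (2 : K)] (hJ : IsNoncommJordan m)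
    (hzd : ∀ a b : A, m a b = 0 → a = 0 ∨ b = 0) {u n : A} (hu : u ≠ 0) (huu : m u u = u)
    (hn : m u n + m n u = n) : n = 0 := by
  by_contra hn0
  have hn2 : m n n ≠ 0 := fun h => hn0 ((hzd n n h).elim id id)
  have hassoc : m (m (m n n) u) u = m (m n n) (m u u) := by
    have h := hJ.jordan_linearized n u u
    rw [add_comm (m n u), hn, hJ.flexible n u] at h
    exact add_left_cancel h
  rw [huu] at hassoc
  have hun2 : m u (m n n) = m n n := by
    have h := hJ.flexible_linearized u u (m n n)
    rw [huu, hassoc] at h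
    exact (cancel_left_of_noZeroDivisors hzd hu (add_right_cancel h)).symm
  have hn2u : m (m n n) u = m n n := by
    have h := (idempotent_fixes_mul_add_mul_sub hJ hzd hu huu (m n n)).2
    rw [hun2, add_sub_cancel_left] at h
    exact cancel_right_of_noZeroDivisors hzd hu h
  have hun : m u n = n := by
    have h := hJ.jordan n u
    rw [hn2u] at h
    exact (cancel_left_of_noZeroDivisors hzd hn2 h).symm
  rw [hun, add_eq_left] at hn
  exact hu ((hzd n u hn).resolve_left hn0)

theorem identity_of_idempotent [NeZero (2 : K)] (hJ : IsNoncommJordan m)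
    (hzd : ∀ a b : A, m a b = 0 → a = 0 ∨ b = 0) {u : A} (hu : u ≠ 0) (huu : m u u = u)
    (x : A) : m u x = x ∧ m x u = x := by
  obtain ⟨hus, hsu⟩ := idempotent_fixes_mul_add_mul_sub hJ hzd hu huu x
  -- `x - (u x + x u - x)` lies in the Peirce `1/2`-space of `u`, which is trivial.
  have hx : x = m u x + m x u - x := by
    refine sub_eq_zero.mp (eq_zero_of_idempotent_mul_add_mul_eq hJ hzd hu huu ?_)
    rw [map_sub (m u) x, map_sub m x, LinearMap.sub_apply, hus, hsu]
    abel
  constructor <;> rw [hx] <;> assumption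

theorem exists_identity [NeZero (2 : K)] [Nontrivial A] (hJ : IsNoncommJordan m)
    (hdiv : ∀ a : A, a ≠ 0 → Function.Bijective (m a)) :
    ∃ u : A, u ≠ 0 ∧ (∀ x, m u x = x) ∧ ∀ x, m x u = x := by
  have hzd (a b : A) : m a b = 0 → a = 0 ∨ b = 0 :=
    eq_zero_or_eq_zero_of_injective_apply fun a ha => (hdiv a ha).injective
  obtain ⟨a, ha⟩ := exists_ne (0 : A)
  obtain ⟨u, hau⟩ := (hdiv a ha).surjective a
  have hu : u ≠ 0 := by
    rintro rfl
    exact ha (by simpa using hau.symm)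
  have hid := identity_of_idempotent hJ hzd hu (mul_self_eq_of_mul_eq_self hJ hzd ha hau)
  exact ⟨u, hu, fun x => (hid x).1, fun x => (hid x).2⟩

theorem mul_eq_identity_of_mul_eq_identity (hJ : IsNoncommJordan m)
    (hzd : ∀ a b : A, m a b = 0 → a = 0 ∨ b = 0) {u z r : A} (hul : ∀ x, m u x = x)
    (hur : ∀ x, m x u = x) (hz : z ≠ 0) (hzr : m z r = u) : m r z = u :=
  cancel_left_of_noZeroDivisors hzd hz (by rw [← hJ.flexible, hzr, hul, hur])

theorem sq_mul_eq_of_mul_eq_identity [NeZero (2 : K)] (hJ : IsNoncommJordan m)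
    (hzd : ∀ a b : A, m a b = 0 → a = 0 ∨ b = 0) {u z r : A} (hul : ∀ x, m u x = x)
    (hur : ∀ x, m x u = x) (hz : z ≠ 0) (hzr : m z r = u) : m (m z z) r = z :=
  cancel_right_of_noZeroDivisors hzd hz (by
    rw [hJ.jordan, mul_eq_identity_of_mul_eq_identity hJ hzd hul hur hz hzr, hur])

theorem sq_mul_assoc_of_mul_eq_identity [NeZero (2 : K)] (hJ : IsNoncommJordan m)
    (hzd : ∀ a b : A, m a b = 0 → a = 0 ∨ b = 0) {u z r : A} (hul : ∀ x, m u x = x)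
    (hur : ∀ x, m x u = x) (hz : z ≠ 0) (hzr : m z r = u) (y : A) :
    m (m (m z z) y) r = m (m z z) (m y r) := by
  have h := hJ.jordan_linearized z r y
  simp only [hzr, mul_eq_identity_of_mul_eq_identity hJ hzd hul hur hz hzr, map_add,
    LinearMap.add_apply, hul] at h
  exact add_left_cancel h

theorem resolvent_step [NeZero (2 : K)] (hJ : IsNoncommJordan m)
    (hzd : ∀ a b : A, m a b = 0 → a = 0 ∨ b = 0) {u z r s : A} (hul : ∀ x, m u x = x)
    (hur : ∀ x, m x u = x) (δ : K) (hz : z ≠ 0) (hw : z - δ • u ≠ 0)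
    (hz' : z - (2 * δ) • u ≠ 0) (hzr : m z r = u) (hws : m (z - δ • u) s = u) :
    s = r + δ • m r s := by
  set w := z - δ • u with hw_def
  have hw2 : m w w = m z z - (2 * δ) • z + δ ^ 2 • u := by
    simp only [w, map_sub, map_smul, LinearMap.sub_apply, LinearMap.smul_apply, hul, hur]
    module
  have hw2r : m (m w w) r = z - (2 * δ) • u + δ ^ 2 • r := by
    rw [hw2]
    simp only [map_add, map_sub, map_smul, LinearMap.add_apply, LinearMap.sub_apply,
      LinearMap.smul_apply, sq_mul_eq_of_mul_eq_identity hJ hzd hul hur hz hzr, hzr, hul]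
  have hzs : m z s = u + δ • s := by
    rw [show z = w + δ • u by simp [w]]
    simp only [map_add, map_smul, LinearMap.add_apply, LinearMap.smul_apply, hws, hul]
  have hw2rs : m (m w w) (m r s) = u - δ • s + δ ^ 2 • m r s := by
    rw [← sq_mul_assoc_of_mul_eq_identity hJ hzd hul hur hw hws r, hw2r]
    simp only [map_add, map_sub, map_smul, LinearMap.add_apply, LinearMap.sub_apply,
      LinearMap.smul_apply, hzs, hul]
    module
  -- `w² - δ² u = (w - δ u) (w + δ u)` with `w - δ u = z - 2δ u` and `w + δ u = z`.
  have hfactor : m (z - (2 * δ) • u) z = m w w - δ ^ 2 • u := by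
    rw [hw2]
    simp only [map_sub, map_smul, LinearMap.sub_apply, LinearMap.smul_apply, hul]
    module
  have key : m (m (z - (2 * δ) • u) z) (s - r - δ • m r s) = 0 := by
    rw [hfactor]
    simp only [map_sub, map_smul, LinearMap.sub_apply, LinearMap.smul_apply, hul, hw2r, hw2rs,
      sq_mul_eq_of_mul_eq_identity hJ hzd hul hur hw hws]
    rw [hw_def]
    module
  rcases hzd _ _ key with h | h
  · exact ((hzd _ _ h).elim hz' hz).elim
  · exact sub_eq_zero.mp (by rw [← h]; abel)

theorem resolvent_identity [NeZero (2 : K)] (hJ : IsNoncommJordan m)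
    (hzd : ∀ a b : A, m a b = 0 → a = 0 ∨ b = 0) {u : A} (hul : ∀ x, m u x = x)
    (hur : ∀ x, m x u = x) {x : A} (hx : ∀ s : K, x - s • u ≠ 0) {r : K → A}
    (hr : ∀ s, m (x - s • u) (r s) = u) (s t : K) :
    r t = r s + (t - s) • m (r s) (r t) := by
  have ht : x - t • u = x - s • u - (t - s) • u := by module
  have h2 : x - s • u - (2 * (t - s)) • u = x - (2 * t - s) • u := by module
  refine resolvent_step hJ hzd hul hur (t - s) (hx s) ?_ ?_ (hr s) ?_
  · rw [← ht]; exact hx t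
  · rw [h2]; exact hx _
  · rw [← ht]; exact hr t

end IsNoncommJordan

end Algebraic

section PseudoResolvent

variable {𝕜 A : Type*} [NontriviallyNormedField 𝕜] [NormedAddCommGroup A] [NormedSpace 𝕜 A]
  {m : A →ₗ[𝕜] A →ₗ[𝕜] A} {r : 𝕜 → A}

theorem continuous_of_resolvent_identity (hnorm : ∀ x y : A, ‖m x y‖ ≤ ‖x‖ * ‖y‖)
    (hr : ∀ s t, r t = r s + (t - s) • m (r s) (r t)) : Continuous r := by
  refine continuous_iff_continuousAt.mpr fun s => ?_
  have hdiff (t : 𝕜) : ‖r t - r s‖ ≤ ‖t - s‖ * ‖r s‖ * ‖r t‖ := by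
    rw [sub_eq_iff_eq_add'.mpr (hr s t), norm_smul, mul_assoc]
    exact mul_le_mul_of_nonneg_left (hnorm _ _) (norm_nonneg _)
  have hlim : Tendsto (fun t => ‖t - s‖ * ‖r s‖) (𝓝 s) (𝓝 0) := by
    simpa using (tendsto_norm_sub_self s).mul_const ‖r s‖
  -- Near `s`, the estimate `‖r t - r s‖ ≤ ‖r t‖ / 2` gives `‖r t‖ ≤ 2 ‖r s‖`.
  have hsmall : ∀ᶠ t in 𝓝 s, ‖r t - r s‖ ≤ ‖t - s‖ * (2 * ‖r s‖ ^ 2) := by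
    filter_upwards [hlim.eventually (ge_mem_nhds one_half_pos)] with t ht
    have hrt : ‖r t‖ ≤ 2 * ‖r s‖ := by
      have := norm_le_norm_add_norm_sub' (r t) (r s)
      nlinarith [hdiff t, norm_nonneg (r t)]
    calc ‖r t - r s‖ ≤ ‖t - s‖ * ‖r s‖ * ‖r t‖ := hdiff t
      _ ≤ ‖t - s‖ * ‖r s‖ * (2 * ‖r s‖) := by gcongr
      _ = ‖t - s‖ * (2 * ‖r s‖ ^ 2) := by ring
  rw [ContinuousAt, tendsto_iff_norm_sub_tendsto_zero]
  refine squeeze_zero' (Eventually.of_forall fun t => norm_nonneg _) hsmall ?_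
  simpa using (tendsto_norm_sub_self s).mul_const (2 * ‖r s‖ ^ 2)

theorem hasDerivAt_of_resolvent_identity (hnorm : ∀ x y : A, ‖m x y‖ ≤ ‖x‖ * ‖y‖)
    (hr : ∀ s t, r t = r s + (t - s) • m (r s) (r t)) (s : 𝕜) :
    HasDerivAt r (m (r s) (r s)) s := by
  rw [hasDerivAt_iff_tendsto_slope]
  have hslope : ∀ᶠ t in 𝓝[≠] s, m (r s) (r t) = slope r s t := by
    filter_upwards [self_mem_nhdsWithin] with t ht
    rw [slope_def_module, sub_eq_iff_eq_add'.mpr (hr s t), smul_smul,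
      inv_mul_cancel₀ (sub_ne_zero.mpr ht), one_smul]
  have hmul : Continuous (m (r s)) :=
    AddMonoidHomClass.continuous_of_bound (m (r s)) ‖r s‖ (hnorm (r s))
  refine Tendsto.congr' hslope (Tendsto.mono_left ?_ nhdsWithin_le_nhds)
  exact (hmul.comp (continuous_of_resolvent_identity hnorm hr)).tendsto s

theorem tendsto_cocompact_of_sub_smul_mul_eq [ProperSpace 𝕜]
    (hnorm : ∀ x y : A, ‖m x y‖ ≤ ‖x‖ * ‖y‖) {u : A} (hul : ∀ x, m u x = x) (x : A)
    (hr : ∀ s, m (x - s • u) (r s) = u) : Tendsto r (cocompact 𝕜) (𝓝 0) := by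
  have hbound (s : 𝕜) (hs : ‖x‖ < ‖s‖) : ‖r s‖ ≤ ‖u‖ / (‖s‖ - ‖x‖) := by
    have hsr : s • r s = m x (r s) - u := by
      rw [← hr s, map_sub, map_smul, LinearMap.sub_apply, LinearMap.smul_apply, hul]
      abel
    have : ‖s‖ * ‖r s‖ ≤ ‖x‖ * ‖r s‖ + ‖u‖ := by
      rw [← norm_smul, hsr]
      exact (norm_sub_le _ _).trans (by gcongr; exact hnorm _ _)
    rw [le_div_iff₀ (sub_pos.mpr hs)]
    linarith
  refine squeeze_zero_norm' ?_ ((tendsto_const_nhds (x := ‖u‖)).div_atTop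
    (tendsto_atTop_add_const_right _ (-‖x‖) tendsto_norm_cocompact_atTop))
  filter_upwards [tendsto_norm_cocompact_atTop.eventually_gt_atTop ‖x‖] with s hs
  simpa [sub_eq_add_neg] using hbound s hs

end PseudoResolvent

theorem IsNoncommJordan.exists_eq_smul_identity {A : Type*} [NormedAddCommGroup A]
    [NormedSpace ℂ A] {m : A →ₗ[ℂ] A →ₗ[ℂ] A} (hJ : IsNoncommJordan m)
    (hnorm : ∀ x y : A, ‖m x y‖ ≤ ‖x‖ * ‖y‖)
    (hdiv : ∀ a : A, a ≠ 0 → Function.Bijective (m a)) {u : A} (hu : u ≠ 0)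
    (hul : ∀ x, m u x = x) (hur : ∀ x, m x u = x) (x : A) : ∃ c : ℂ, x = c • u := by
  by_contra! hx
  have hx' (c : ℂ) : x - c • u ≠ 0 := sub_ne_zero.mpr (hx c)
  choose r hr using fun c => (hdiv _ (hx' c)).surjective u
  have hzd (a b : A) : m a b = 0 → a = 0 ∨ b = 0 :=
    eq_zero_or_eq_zero_of_injective_apply fun a ha => (hdiv a ha).injective
  have hres := hJ.resolvent_identity hzd hul hur hx' hr
  have hdiff : Differentiable ℂ r := fun c =>
    (hasDerivAt_of_resolvent_identity hnorm hres c).differentiableAt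
  have hr0 : r 0 = 0 :=
    hdiff.apply_eq_of_tendsto_cocompact 0 (tendsto_cocompact_of_sub_smul_mul_eq hnorm hul x hr)
  exact hu (by simpa [hr0] using (hr 0).symm)

theorem exists_linearEquiv_mul_of_forall_eq_smul {K A : Type*} [Field K] [AddCommGroup A]
    [Module K A] {m : A →ₗ[K] A →ₗ[K] A} {u : A} (hu : u ≠ 0) (huu : m u u = u)
    (hspan : ∀ x, ∃ c : K, x = c • u) :
    ∃ e : A ≃ₗ[K] K, ∀ x y, e (m x y) = e x * e y := by
  let e := (LinearEquiv.ofBijective (LinearMap.toSpanSingleton K A u)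
    ⟨smul_left_injective K hu, fun x => (hspan x).imp fun _ h => h.symm⟩).symm
  have he (c : K) : e (c • u) = c := e.apply_symm_apply c
  refine ⟨e, fun x y => ?_⟩
  obtain ⟨a, rfl⟩ := hspan x
  obtain ⟨b, rfl⟩ := hspan y
  have hab : m (a • u) (b • u) = (a * b) • u := by
    rw [map_smul, map_smul, LinearMap.smul_apply, huu, smul_smul, mul_comm]
  rw [hab, he, he, he]

theorem noncomm_jordan_normed_complex_left_division_iso_complex
    {A : Type*} [NormedAddCommGroup A] [NormedSpace ℂ A] [Nontrivial A]
    (m : A →ₗ[ℂ] A →ₗ[ℂ] A)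
    (hnorm : ∀ x y : A, ‖m x y‖ ≤ ‖x‖ * ‖y‖)
    (hflex : ∀ x y : A, m (m x y) x = m x (m y x))
    (hjordan : ∀ x y : A, m (m (m x x) y) x = m (m x x) (m y x))
    (hdiv : ∀ a : A, a ≠ 0 → Function.Bijective (fun x => m a x)) :
    ∃ e : A ≃ₗ[ℂ] ℂ, ∀ x y : A, e (m x y) = e x * e y := by
  have hJ : IsNoncommJordan m := ⟨hflex, hjordan⟩
  obtain ⟨u, hu, hul, hur⟩ := hJ.exists_identity hdiv
  exact exists_linearEquiv_mul_of_forall_eq_smul hu (hul u)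
    (hJ.exists_eq_smul_identity hnorm hdiv hu hul hur)
end

section
/- Let K be a field of characteristic zero and let A be a noncommutative Jordan algebra over K without zero divisors (xy = 0 implies x = 0 or y = 0) containing a left linearly invertible element. Then A has a two-sided identity element. -/
/-!
Take `e` with `a * e = a`. Flexibility and the Jordan identity, together with cancellation by
`a` (no zero divisors), show that `e * a = a` and that `e` is idempotent. Put `T = L_e + R_e`.
Writing an arbitrary `z` as `a * w`, the linearized Jordan identity shows that `(T - 1) z`
is fixed by `L_e`, and cancelling `a` on the right that it is fixed by `R_e` as well. On the other
hand the kernel of `T - 1` (the Peirce `1/2`-space of `e`) is zero: for `q` in it, `q * q`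
commutes with `e` and is fixed by `R_e`, which forces `(q * q) * (q * e) = 0`. Since
`T (T - 1) = 2 (T - 1)` and `T - 1` is injective, `T = 2`, so `(T - 1) z = z` is fixed by
`L_e` and `R_e`: `e` is a two-sided identity.
-/

theorem two_sided_identity_of_peirce {A : Type*} [NonUnitalNonAssocRing A] {e : A}
    (hleft : ∀ z : A, e * (e * z + z * e - z) = e * z + z * e - z)
    (hright : ∀ z : A, (e * z + z * e - z) * e = e * z + z * e - z)
    (hhalf : ∀ q : A, e * q + q * e = q → q = 0) :
    (∀ z : A, e * z = z) ∧ ∀ z : A, z * e = z := by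
  have hsum (z : A) : e * z + z * e = z + z := by
    have h := hhalf (e * z + z * e - z - z) (by rw [mul_sub, sub_mul, hleft, hright]; abel)
    linear_combination (norm := abel) h
  refine ⟨fun z => ?_, fun z => ?_⟩
  · simpa [hsum z] using hleft z
  · simpa [hsum z] using hright z

/-- Noncommutative Jordan algebras in Schafer's sense; Mathlib's `IsJordan` postulates more. -/
class IsNoncommJordan_s5 (A : Type*) [Mul A] : Prop where
  flexible : ∀ x y : A, x * y * x = x * (y * x)
  jordan : ∀ x y : A, x * x * y * x = x * x * (y * x)

namespace IsNoncommJordan_s5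

variable {A : Type*} [NonUnitalNonAssocRing A] [IsNoncommJordan_s5 A]

theorem flexible_linearized_s5 (x y z : A) :
    x * y * z + z * y * x = x * (y * z) + z * (y * x) := by
  have h := flexible (x + z) y
  simp only [add_mul, mul_add] at h
  linear_combination (norm := abel) h - flexible x y - flexible z y

theorem jordan_linearized_s5 [IsAddTorsionFree A] (x z y : A) :
    (x * z + z * x) * y * x + x * x * y * z = (x * z + z * x) * (y * x) + x * x * (y * z) := by
  have hplus := jordan (x + z) y
  have hminus := jordan (x - z) y
  simp only [add_mul, mul_add, sub_mul, mul_sub] at hplus hminus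
  refine (nsmul_right_inj two_ne_zero).mp ?_
  simp only [two_nsmul, add_mul]
  linear_combination (norm := abel) hplus - hminus - jordan z y - jordan z y

variable {a e : A}

theorem mul_mul_eq_of_mul_eq_self (hae : a * e = a) (hea : e * a = a) (w : A) :
    w * a * e = w * a + e * (a * w) - a * w := by
  have h := flexible_linearized_s5 e a w
  rw [hea, hae] at h
  linear_combination (norm := abel) h

theorem mul_mul_sub_eq_of_mul_eq_self (hae : a * e = a) (hea : e * a = a) (x : A) :
    x * e * a - x * a = a * (e * x) - a * x := by
  have h := flexible_linearized_s5 a e x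
  rw [hae, hea] at h
  linear_combination (norm := abel) h

theorem mul_mul_assoc_of_mul_eq_self [IsAddTorsionFree A] (hae : a * e = a) (hea : e * a = a)
    (he : IsIdempotentElem e) (y : A) : a * y * e = a * (y * e) := by
  have h := jordan_linearized_s5 e a y
  rw [hea, hae, he.eq] at h
  simp only [add_mul] at h
  linear_combination (norm := abel) h - flexible_linearized_s5 a y e

theorem mul_mul_assoc_of_mul_eq_self' [IsAddTorsionFree A] (hae : a * e = a) (hea : e * a = a)
    (he : IsIdempotentElem e) (y : A) : e * y * a = e * (y * a) := by
  linear_combination (norm := abel) flexible_linearized_s5 a y e -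
    mul_mul_assoc_of_mul_eq_self hae hea he y

theorem mul_mul_add_mul_mul_eq_of_mul_eq_self [IsAddTorsionFree A] (hae : a * e = a) (hea : e * a = a)
    (he : IsIdempotentElem e) (w : A) :
    e * (e * (a * w)) + e * (a * w) * e = e * (a * w) + e * (a * w) + a * w * e - a * w := by
  have h := jordan_linearized_s5 e w a
  rw [he.eq, hea, hae] at h
  simp only [add_mul] at h
  rw [mul_mul_assoc_of_mul_eq_self' hae hea he, flexible, mul_mul_eq_of_mul_eq_self hae hea,
    mul_mul_eq_of_mul_eq_self hae hea, ← mul_mul_assoc_of_mul_eq_self hae hea he,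
    ← flexible, mul_sub, mul_add] at h
  linear_combination (norm := abel) h

theorem mul_peirce_eq_of_surjective [IsAddTorsionFree A] (hae : a * e = a) (hea : e * a = a)
    (he : IsIdempotentElem e) (hsurj : Function.Surjective (a * ·)) (z : A) :
    e * (e * z + z * e - z) = e * z + z * e - z := by
  obtain ⟨w, rfl⟩ := hsurj z
  rw [mul_sub, mul_add, ← flexible]
  linear_combination (norm := abel) mul_mul_add_mul_mul_eq_of_mul_eq_self hae hea he w

variable [NoZeroDivisors A]

theorem mul_eq_self_of_mul_eq_self (ha : a ≠ 0) (hae : a * e = a) : e * a = a :=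
  mul_left_cancel₀ ha (by rw [← flexible, hae])

theorem mul_self_mul_eq_self (ha : a ≠ 0) (hae : a * e = a) : a * a * e = a * a :=
  mul_right_cancel₀ ha (by rw [jordan, mul_eq_self_of_mul_eq_self ha hae])

theorem isIdempotentElem_of_mul_eq_self [IsAddTorsionFree A] (ha : a ≠ 0) (hae : a * e = a) :
    IsIdempotentElem e := by
  have haae := mul_self_mul_eq_self ha hae
  have h := jordan_linearized_s5 a e e
  rw [hae, mul_eq_self_of_mul_eq_self ha hae, haae, haae] at h
  simp only [add_mul, hae] at h
  refine mul_left_cancel₀ (mul_ne_zero ha ha) ?_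
  rw [haae]
  linear_combination (norm := abel) -h

theorem peirce_mul_eq_of_mul_eq_self (ha : a ≠ 0) (hae : a * e = a) (hea : e * a = a) {w : A}
    (hw : e * w = w) : w * e = w := by
  have h := mul_mul_sub_eq_of_mul_eq_self hae hea w
  rw [hw, sub_self, ← sub_mul] at h
  exact sub_eq_zero.mp ((mul_eq_zero.mp h).resolve_right ha)

theorem eq_zero_of_mul_add_mul_eq_self [IsAddTorsionFree A] (he0 : e ≠ 0)
    (he : IsIdempotentElem e) (hpeirce : ∀ z : A, e * (e * z + z * e - z) = e * z + z * e - z)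
    {q : A} (hq : e * q + q * e = q) : q = 0 := by
  have hqe : q * e = q - e * q := eq_sub_of_add_eq' hq
  have hsq : q * q = e * q * q + q * (e * q) := by
    have h := flexible q e
    rw [hqe, sub_mul] at h
    linear_combination (norm := abel) h
  have hcomm : e * (q * q) = q * q * e := by
    have h := flexible_linearized_s5 q q e
    rw [hqe, mul_sub] at h
    linear_combination (norm := abel) -h - hsq
  have hassoc : q * q * e * e = q * q * e := by
    have h := jordan_linearized_s5 q e e
    rw [add_comm (q * e), hq, flexible, he.eq] at h
    exact add_left_cancel h
  have hsq_mul : q * q * e = q * q := by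
    have h := hpeirce (q * q)
    rw [hcomm, mul_sub, mul_add, ← flexible, hcomm, hassoc] at h
    linear_combination (norm := abel) -h
  have h0 : q * q * (q * e) = 0 := by rw [hqe, mul_sub, ← jordan, hsq_mul, sub_self]
  rcases mul_eq_zero.mp h0 with h | h
  · exact mul_self_eq_zero.mp h
  · exact (mul_eq_zero.mp h).resolve_right he0

theorem exists_two_sided_identity_of_surjective_mul_left [IsAddTorsionFree A] {a : A}
    (hsurj : Function.Surjective (a * ·)) :
    ∃ e : A, (∀ x : A, e * x = x) ∧ ∀ x : A, x * e = x := by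
  rcases eq_or_ne a 0 with rfl | ha
  · have hzero (x : A) : x = 0 := by
      obtain ⟨y, rfl⟩ := hsurj x
      exact zero_mul y
    exact ⟨0, fun x => by rw [hzero x, mul_zero], fun x => by rw [hzero x, zero_mul]⟩
  obtain ⟨e, hae⟩ := hsurj a
  have hea := mul_eq_self_of_mul_eq_self ha hae
  have he := isIdempotentElem_of_mul_eq_self ha hae
  have he0 : e ≠ 0 := by
    rintro rfl
    exact ha (by simpa using hae.symm)
  have hleft := mul_peirce_eq_of_surjective hae hea he hsurj
  exact ⟨e, two_sided_identity_of_peirce hleft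
    (fun z => peirce_mul_eq_of_mul_eq_self ha hae hea (hleft z))
    (fun _ => eq_zero_of_mul_add_mul_eq_self he0 he hleft)⟩

end IsNoncommJordan_s5

theorem noncomm_jordan_no_zero_divisors_with_left_inv_is_unital_general
    {K A : Type*} [Field K] [CharZero K]
    [NonUnitalNonAssocRing A] [Module K A]
    (hflex : ∀ x y : A, (x * y) * x = x * (y * x))
    (hjordan : ∀ x y : A, ((x * x) * y) * x = (x * x) * (y * x))
    (hnzd : ∀ x y : A, x * y = 0 → x = 0 ∨ y = 0)
    (hinv : ∃ a : A, Function.Bijective (fun x : A => a * x)) :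
    ∃ e : A, (∀ x : A, e * x = x) ∧ (∀ x : A, x * e = x) := by
  have : IsNoncommJordan_s5 A := ⟨hflex, hjordan⟩
  have : NoZeroDivisors A := ⟨hnzd _ _⟩
  have : IsAddTorsionFree A := .of_isTorsionFree K A
  obtain ⟨a, hbij⟩ := hinv
  exact IsNoncommJordan_s5.exists_two_sided_identity_of_surjective_mul_left hbij.surjective

theorem noncomm_jordan_no_zero_divisors_with_left_inv_is_unital
    {K A : Type*} [Field K] [CharZero K]
    [NonUnitalNonAssocRing A] [Module K A] [SMulCommClass K A A] [IsScalarTower K A A]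
    (hflex : ∀ x y : A, (x * y) * x = x * (y * x))
    (hjordan : ∀ x y : A, ((x * x) * y) * x = (x * x) * (y * x))
    (hnzd : ∀ x y : A, x * y = 0 → x = 0 ∨ y = 0)
    (hinv : ∃ a : A, Function.Bijective (fun x : A => a * x)) :
    ∃ e : A, (∀ x : A, e * x = x) ∧ (∀ x : A, x * e = x) :=
  noncomm_jordan_no_zero_divisors_with_left_inv_is_unital_general (K := K) hflex hjordan hnzd hinv
end

section
/- Let V be a finite-dimensional real vector space of dimension at least 1, (·|·) a negative definite symmetric bilinear form on V, ∧ an anticommutative bilinear product on V, and φ a linear automorphism of V. Define x Δ y = φ*(φ(x) ∧ φ(y)), where φ* is the adjoint of φ with respect to (·|·). Then the algebra (V,(·|·),∧) is flexible and of linear division if and only if the algebra (V,(·|·),Δ) is flexible and of linear division. -/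
/-!
For negative definite `B` and anticommutative `∧`, the flexible law on `ℝ × V` is equivalent to
`B (x ∧ y) x = 0`. Granting it, linear division is equivalent to: `x ∧ y = 0` with `x ≠ 0` forces
`y ∈ ℝ x`. Indeed, pairing the vector part of `(a + x)(b + y) = 0` with `x` gives
`b (B x x - a²) = 0`, so `b = 0`, and pairing it then with `y` gives `a B y y = 0`; right
multiplication is left multiplication for the opposite product, and in finite dimension injective
operators are bijective. Both conditions pass to `x Δ y = φ* (φ x ∧ φ y)`, because
`B (x Δ y) x = B (φ x ∧ φ y) (φ x)` and `φ*` is injective (`B (φ* z) (φ⁻¹ z) = B z z`).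
-/

/-- The quadratic algebra product on `ℝ × V` built from a bilinear form `B` and an
anticommutative product `w` on `V`:
`(α+x)(β+y) = (αβ + B x y) + (α y + β x + w x y)`. -/
def quadMul {V : Type*} [AddCommGroup V] [Module ℝ V]
    (B : V →ₗ[ℝ] V →ₗ[ℝ] ℝ) (w : V → V → V) (p q : ℝ × V) : ℝ × V :=
  (p.1 * q.1 + B p.2 q.2, p.1 • q.2 + q.1 • p.2 + w p.2 q.2)

def IsFlexible {A : Type*} (mul : A → A → A) : Prop :=
  ∀ p q, mul (mul p q) p = mul p (mul q p)

def IsLinearDivision {A : Type*} [Zero A] (mul : A → A → A) : Prop :=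
  ∀ p, p ≠ 0 → Function.Bijective (fun q => mul p q) ∧ Function.Bijective (fun q => mul q p)

section QuadraticAlgebra

variable {V : Type*} [AddCommGroup V] [Module ℝ V] {B : V →ₗ[ℝ] V →ₗ[ℝ] ℝ}

section Bilinear

variable (B) (w : V →ₗ[ℝ] V →ₗ[ℝ] V)

def quadMulₗ : (ℝ × V) →ₗ[ℝ] (ℝ × V) →ₗ[ℝ] ℝ × V :=
  LinearMap.mk₂ ℝ (quadMul B fun x y => w x y)
    (fun p p' q => by simp only [quadMul, Prod.fst_add, Prod.snd_add, map_add,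
        LinearMap.add_apply, Prod.mk_add_mk, add_smul]; congr 1 <;> [ring; module])
    (fun c p q => by simp only [quadMul, Prod.smul_fst, Prod.smul_snd, map_smul,
        LinearMap.smul_apply, Prod.smul_mk, smul_eq_mul, smul_add, smul_smul]; congr 1 <;>
        [ring; module])
    (fun p q q' => by simp only [quadMul, Prod.fst_add, Prod.snd_add, map_add,
        Prod.mk_add_mk, add_smul, smul_add]; congr 1 <;> [ring; module])
    (fun c p q => by simp only [quadMul, Prod.smul_fst, Prod.smul_snd, map_smul,
        Prod.smul_mk, smul_eq_mul, smul_add, smul_smul]; congr 1 <;> [ring; module])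

@[simp]
theorem quadMulₗ_apply (p q : ℝ × V) : quadMulₗ B w p q = quadMul B (fun x y => w x y) p q :=
  rfl

theorem quadMulₗ_flip (hsymm : ∀ x y : V, B x y = B y x) :
    (quadMulₗ B w).flip = quadMulₗ B w.flip := by
  refine LinearMap.ext fun p => LinearMap.ext fun q => ?_
  simp only [LinearMap.flip_apply, quadMulₗ_apply, quadMul]
  rw [mul_comm, hsymm, add_comm (q.1 • p.2)]

end Bilinear

variable {w : V →ₗ[ℝ] V →ₗ[ℝ] V}

theorem apply_self_eq_zero_of_anticomm (hanti : ∀ x y : V, w x y = -(w y x)) (x : V) :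
    w x x = 0 :=
  (smul_eq_zero.mp (two_smul ℝ (w x x) ▸ eq_neg_iff_add_eq_zero.mp (hanti x x))).resolve_left
    two_ne_zero

theorem quadMul_flexibility_defect (hsymm : ∀ x y : V, B x y = B y x)
    (hanti : ∀ x y : V, w x y = -(w y x)) (p q : ℝ × V) :
    quadMul B (fun x y => w x y) (quadMul B (fun x y => w x y) p q) p -
        quadMul B (fun x y => w x y) p (quadMul B (fun x y => w x y) q p) =
      (2 * B (w p.2 q.2) p.2, 0) := by
  obtain ⟨a, x⟩ := p
  obtain ⟨b, y⟩ := q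
  have hxx := apply_self_eq_zero_of_anticomm hanti x
  simp only [quadMul, map_add, map_smul, LinearMap.add_apply, LinearMap.smul_apply, smul_eq_mul,
    Prod.mk_sub_mk, hxx, hanti y x, hanti x (w x y), map_neg, hsymm y x,
    hsymm x (w x y)]
  congr 1 <;> [ring; module]

theorem quadMul_isFlexible_iff (hsymm : ∀ x y : V, B x y = B y x)
    (hanti : ∀ x y : V, w x y = -(w y x)) :
    IsFlexible (quadMul B fun x y => w x y) ↔ ∀ x y, B (w x y) x = 0 := by
  have defect_eq_zero_iff (p q : ℝ × V) :
      quadMul B (fun x y => w x y) (quadMul B (fun x y => w x y) p q) p =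
          quadMul B (fun x y => w x y) p (quadMul B (fun x y => w x y) q p) ↔
        B (w p.2 q.2) p.2 = 0 := by
    rw [← sub_eq_zero, quadMul_flexibility_defect hsymm hanti]
    simp
  simp only [IsFlexible, defect_eq_zero_iff, Prod.forall]
  exact ⟨fun h x y => h 0 x 0 y, fun h _ x _ y => h x y⟩

theorem quadMulₗ_injective (hsymm : ∀ x y : V, B x y = B y x)
    (hneg : ∀ x : V, x ≠ 0 → B x x < 0) (hinv_left : ∀ x y, B (w x y) x = 0)
    (hinv_right : ∀ x y, B (w x y) y = 0)
    (hdep : ∀ x y : V, x ≠ 0 → w x y = 0 → ∃ c : ℝ, y = c • x) {p : ℝ × V} (hp : p ≠ 0) :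
    Function.Injective (quadMulₗ B w p) := by
  rw [← LinearMap.ker_eq_bot, LinearMap.ker_eq_bot']
  obtain ⟨a, x⟩ := p
  rintro ⟨b, y⟩ hq
  simp only [quadMulₗ_apply, quadMul, Prod.mk_eq_zero] at hq
  obtain ⟨hscalar, hvector⟩ := hq
  have hb : b = 0 := by
    have hnorm : B x x - a * a < 0 := by
      by_cases hx : x = 0
      · have ha : a ≠ 0 := by rintro rfl; exact hp (by simp [hx])
        simpa [hx] using mul_self_pos.mpr ha
      · nlinarith [hneg x hx, mul_self_nonneg a]
    have hx_pair : a * B x y + b * B x x = 0 := by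
      simpa [hsymm x (w x y), hinv_left] using congrArg (B x) hvector
    have : b * (B x x - a * a) = 0 := by linear_combination hx_pair - a * hscalar
    exact (mul_eq_zero.mp this).resolve_right hnorm.ne
  subst hb
  have hBxy : B x y = 0 := by simpa using hscalar
  have hvec : a • y + w x y = 0 := by simpa using hvector
  suffices hy : y = 0 by simp [hy]
  by_cases ha : a = 0
  · subst ha
    have hx : x ≠ 0 := by rintro rfl; exact hp rfl
    obtain ⟨c, rfl⟩ := hdep x y hx (by simpa using hvec)
    have : c * B x x = 0 := by simpa using hBxy
    simp [(mul_eq_zero.mp this).resolve_right (hneg x hx).ne]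
  · have : a * B y y = 0 := by
      simpa [hsymm y (w x y), hinv_right] using congrArg (B y) hvec
    by_contra hy
    exact (hneg y hy).ne ((mul_eq_zero.mp this).resolve_left ha)

theorem quadMul_isLinearDivision [FiniteDimensional ℝ V] (hsymm : ∀ x y : V, B x y = B y x)
    (hneg : ∀ x : V, x ≠ 0 → B x x < 0) (hanti : ∀ x y : V, w x y = -(w y x))
    (hinv : ∀ x y, B (w x y) x = 0)
    (hdep : ∀ x y : V, x ≠ 0 → w x y = 0 → ∃ c : ℝ, y = c • x) :
    IsLinearDivision (quadMul B fun x y => w x y) := by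
  intro p hp
  have hinv' (x y : V) : B (w x y) y = 0 := by
    rw [hanti, map_neg, LinearMap.neg_apply, hinv, neg_zero]
  have hleft := quadMulₗ_injective hsymm hneg hinv hinv' hdep hp
  have hright : Function.Injective ((quadMulₗ B w).flip p) := by
    rw [quadMulₗ_flip B w hsymm]
    exact quadMulₗ_injective hsymm hneg (fun x y => hinv' y x) (fun x y => hinv y x)
      (fun x y hx h => hdep x y hx (by rw [hanti, ← LinearMap.flip_apply, h, neg_zero])) hp
  exact ⟨⟨hleft, LinearMap.injective_iff_surjective.mp hleft⟩,
    ⟨hright, LinearMap.injective_iff_surjective.mp hright⟩⟩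

theorem exists_eq_smul_of_quadMul_left_injective (hneg : ∀ x : V, x ≠ 0 → B x x < 0)
    (hanti : ∀ x y : V, w x y = -(w y x)) {x y : V} (hx : x ≠ 0)
    (hinj : Function.Injective fun q => quadMul B (fun x y => w x y) (0, x) q)
    (hxy : w x y = 0) : ∃ c : ℝ, y = c • x := by
  refine ⟨B x y / B x x, ?_⟩
  have hBxx : B x x ≠ 0 := (hneg x hx).ne
  have := @hinj (0, y) (0, (B x y / B x x) • x)
    (by simp [quadMul, hxy, apply_self_eq_zero_of_anticomm hanti, hBxx])
  simpa using this

theorem quadMul_isFlexible_and_isLinearDivision_iff [FiniteDimensional ℝ V]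
    (hsymm : ∀ x y : V, B x y = B y x) (hneg : ∀ x : V, x ≠ 0 → B x x < 0)
    (hanti : ∀ x y : V, w x y = -(w y x)) :
    IsFlexible (quadMul B fun x y => w x y) ∧ IsLinearDivision (quadMul B fun x y => w x y) ↔
      (∀ x y, B (w x y) x = 0) ∧ ∀ x y : V, x ≠ 0 → w x y = 0 → ∃ c : ℝ, y = c • x := by
  rw [quadMul_isFlexible_iff hsymm hanti]
  refine and_congr_right fun hinv =>
    ⟨fun hdiv x y hx => ?_, quadMul_isLinearDivision hsymm hneg hanti hinv⟩
  exact exists_eq_smul_of_quadMul_left_injective hneg hanti hx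
    (hdiv (0, x) (by simp [hx])).1.injective

def vectorIsotope (w : V →ₗ[ℝ] V →ₗ[ℝ] V) (φ ψ : V →ₗ[ℝ] V) : V →ₗ[ℝ] V →ₗ[ℝ] V :=
  (w.compl₁₂ φ φ).compr₂ ψ

@[simp]
theorem vectorIsotope_apply (φ ψ : V →ₗ[ℝ] V) (x y : V) :
    vectorIsotope w φ ψ x y = ψ (w (φ x) (φ y)) :=
  rfl

section Isotope

variable {φ : V ≃ₗ[ℝ] V} {ψ : V →ₗ[ℝ] V}

theorem vectorIsotope_anticomm (hanti : ∀ x y : V, w x y = -(w y x)) (x y : V) :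
    vectorIsotope w φ ψ x y = -(vectorIsotope w φ ψ y x) := by
  rw [vectorIsotope_apply, vectorIsotope_apply, hanti, map_neg]

theorem adjoint_injective (hneg : ∀ x : V, x ≠ 0 → B x x < 0)
    (hadj : ∀ x y : V, B (ψ x) y = B x (φ y)) : Function.Injective ψ := by
  rw [← LinearMap.ker_eq_bot, LinearMap.ker_eq_bot']
  intro z hz
  by_contra hz0
  have := hadj z (φ.symm z)
  rw [hz, map_zero, LinearMap.zero_apply, φ.apply_symm_apply] at this
  exact (hneg z hz0).ne this.symm

theorem forall_vectorIsotope_orthogonal_iff (hadj : ∀ x y : V, B (ψ x) y = B x (φ y)) :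
    (∀ x y, B (vectorIsotope w φ ψ x y) x = 0) ↔ ∀ x y, B (w x y) x = 0 := by
  simp only [vectorIsotope_apply, hadj, LinearEquiv.coe_coe]
  exact (φ.surjective.forall₂ (p := fun x y => B (w x y) x = 0)).symm

theorem forall_vectorIsotope_eq_zero_imp_dependent_iff (hψ : Function.Injective ψ) :
    (∀ x y : V, x ≠ 0 → vectorIsotope w φ ψ x y = 0 → ∃ c : ℝ, y = c • x) ↔
      ∀ x y : V, x ≠ 0 → w x y = 0 → ∃ c : ℝ, y = c • x := by
  refine Iff.trans ?_ φ.surjective.forall₂.symm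
  refine forall₂_congr fun x y => ?_
  simp only [vectorIsotope_apply, LinearEquiv.coe_coe, map_eq_zero_iff ψ hψ, ne_eq,
    φ.map_eq_zero_iff, ← map_smul, φ.injective.eq_iff]

end Isotope

end QuadraticAlgebra

theorem vector_isotopy_preserves_flexible_linear_division_general
    {V : Type*} [AddCommGroup V] [Module ℝ V] [FiniteDimensional ℝ V]
    (B : V →ₗ[ℝ] V →ₗ[ℝ] ℝ)
    (hsymm : ∀ x y : V, B x y = B y x)
    (hneg : ∀ x : V, x ≠ 0 → B x x < 0)
    (w : V →ₗ[ℝ] V →ₗ[ℝ] V)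
    (hanti : ∀ x y : V, w x y = -(w y x))
    (φ : V ≃ₗ[ℝ] V) (φs : V →ₗ[ℝ] V)
    (hadj : ∀ x y : V, B (φs x) y = B x (φ y)) :
    ((∀ p q : ℝ × V,
        quadMul B (fun x y => w x y) (quadMul B (fun x y => w x y) p q) p =
          quadMul B (fun x y => w x y) p (quadMul B (fun x y => w x y) q p)) ∧
      (∀ p : ℝ × V, p ≠ 0 →
        Function.Bijective (fun q => quadMul B (fun x y => w x y) p q) ∧
          Function.Bijective (fun q => quadMul B (fun x y => w x y) q p)))
    ↔
    ((∀ p q : ℝ × V,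
        quadMul B (fun x y => φs (w (φ x) (φ y)))
            (quadMul B (fun x y => φs (w (φ x) (φ y))) p q) p =
          quadMul B (fun x y => φs (w (φ x) (φ y))) p
            (quadMul B (fun x y => φs (w (φ x) (φ y))) q p)) ∧
      (∀ p : ℝ × V, p ≠ 0 →
        Function.Bijective (fun q => quadMul B (fun x y => φs (w (φ x) (φ y))) p q) ∧
          Function.Bijective (fun q => quadMul B (fun x y => φs (w (φ x) (φ y))) q p))) := by
  have hφs := adjoint_injective hneg hadj
  have hanti_isotope := vectorIsotope_anticomm (φ := φ) (ψ := φs) hanti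
  refine (quadMul_isFlexible_and_isLinearDivision_iff hsymm hneg hanti).trans
    (Iff.trans ?_ (quadMul_isFlexible_and_isLinearDivision_iff hsymm hneg hanti_isotope).symm)
  exact and_congr (forall_vectorIsotope_orthogonal_iff hadj).symm
    (forall_vectorIsotope_eq_zero_imp_dependent_iff hφs).symm

theorem vector_isotopy_preserves_flexible_linear_division
    {V : Type*} [AddCommGroup V] [Module ℝ V] [FiniteDimensional ℝ V]
    (hdim : 1 ≤ Module.finrank ℝ V)
    (B : V →ₗ[ℝ] V →ₗ[ℝ] ℝ)
    (hsymm : ∀ x y : V, B x y = B y x)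
    (hneg : ∀ x : V, x ≠ 0 → B x x < 0)
    (w : V →ₗ[ℝ] V →ₗ[ℝ] V)
    (hanti : ∀ x y : V, w x y = -(w y x))
    (φ : V ≃ₗ[ℝ] V) (φs : V →ₗ[ℝ] V)
    (hadj : ∀ x y : V, B (φs x) y = B x (φ y)) :
    ((∀ p q : ℝ × V,
        quadMul B (fun x y => w x y) (quadMul B (fun x y => w x y) p q) p =
          quadMul B (fun x y => w x y) p (quadMul B (fun x y => w x y) q p)) ∧
      (∀ p : ℝ × V, p ≠ 0 →
        Function.Bijective (fun q => quadMul B (fun x y => w x y) p q) ∧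
          Function.Bijective (fun q => quadMul B (fun x y => w x y) q p)))
    ↔
    ((∀ p q : ℝ × V,
        quadMul B (fun x y => φs (w (φ x) (φ y)))
            (quadMul B (fun x y => φs (w (φ x) (φ y))) p q) p =
          quadMul B (fun x y => φs (w (φ x) (φ y))) p
            (quadMul B (fun x y => φs (w (φ x) (φ y))) q p)) ∧
      (∀ p : ℝ × V, p ≠ 0 →
        Function.Bijective (fun q => quadMul B (fun x y => φs (w (φ x) (φ y))) p q) ∧
          Function.Bijective (fun q => quadMul B (fun x y => φs (w (φ x) (φ y))) q p))) :=
  vector_isotopy_preserves_flexible_linear_division_general B hsymm hneg w hanti φ φs hadj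
end

section
/- For real numbers δ and δ', the algebras E_{−1,δ'}(ℍ) and E_{−1,δ}(ℍ) are isomorphic as real algebras if and only if δ' = δ or δ' = −δ. -/
/-!
STATEMENT 18: For real numbers `δ` and `δ'`, the generalized Cayley–Dickson extensions
`E_{−1,δ'}(ℍ)` and `E_{−1,δ}(ℍ)` are isomorphic as real algebras if and only if
`δ' = δ` or `δ' = −δ`.  Here `E_{−1,δ}(ℍ)` is `ℍ × ℍ` with product
`(x,y)(x',y') = (xx' − ȳ'y , y x̄' + y' x + (δ/2)[y',y])`.
-/

/-- The product of the generalized Cayley–Dickson extension `E_{−1,δ}(ℍ)`. -/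
noncomputable def cdMul (δ : ℝ) (p q : Quaternion ℝ × Quaternion ℝ) : Quaternion ℝ × Quaternion ℝ :=
  (p.1 * q.1 - star q.2 * p.2,
    p.2 * star q.1 + q.2 * p.1 + (δ / 2) • (q.2 * p.2 - p.2 * q.2))

/-!
Every element of `E_{−1,δ}(ℍ)` satisfies `p² = 2 Re(p) p − ‖p‖² 1` with the Euclidean norm of
`ℍ × ℍ = ℝ⁸`, so an isomorphism, which fixes `1`, also preserves `‖·‖` and is orthogonal.
The Hilbert–Schmidt norm `∑ᵢⱼ ‖bᵢ bⱼ‖²` of the multiplication does not depend on the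
orthonormal basis `b`, so it is an isomorphism invariant; on the standard basis it equals
`64 + 6 δ²`, the `δ`-dependent part coming from the commutators of the imaginary units.
Conversely `(x, y) ↦ (x, −y)` is an isomorphism `E_{−1,−δ}(ℍ) ≅ E_{−1,δ}(ℍ)`.
-/

open scoped InnerProductSpace

namespace OrthonormalBasis

variable {𝕜 E F G ι ι' κ κ' : Type*} [RCLike 𝕜]
  [NormedAddCommGroup E] [InnerProductSpace 𝕜 E] [FiniteDimensional 𝕜 E]
  [NormedAddCommGroup F] [InnerProductSpace 𝕜 F] [FiniteDimensional 𝕜 F]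
  [NormedAddCommGroup G] [InnerProductSpace 𝕜 G] [FiniteDimensional 𝕜 G]
  [Fintype ι] [Fintype ι'] [Fintype κ] [Fintype κ']

theorem sum_sq_norm_apply_eq_sum_sq_norm_adjoint (f : E →ₗ[𝕜] F)
    (b : OrthonormalBasis ι 𝕜 E) (c : OrthonormalBasis κ 𝕜 F) :
    ∑ i, ‖f (b i)‖ ^ 2 = ∑ k, ‖LinearMap.adjoint f (c k)‖ ^ 2 :=
  calc ∑ i, ‖f (b i)‖ ^ 2 = ∑ i, ∑ k, ‖⟪c k, f (b i)⟫_𝕜‖ ^ 2 := by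
        simp only [c.sum_sq_norm_inner_right]
    _ = ∑ k, ∑ i, ‖⟪LinearMap.adjoint f (c k), b i⟫_𝕜‖ ^ 2 := by
        rw [Finset.sum_comm]
        simp only [LinearMap.adjoint_inner_left]
    _ = ∑ k, ‖LinearMap.adjoint f (c k)‖ ^ 2 := by
        simp only [b.sum_sq_norm_inner_left]

theorem sum_sq_norm_apply_eq (f : E →ₗ[𝕜] F)
    (b : OrthonormalBasis ι 𝕜 E) (b' : OrthonormalBasis ι' 𝕜 E) :
    ∑ i, ‖f (b i)‖ ^ 2 = ∑ i, ‖f (b' i)‖ ^ 2 := by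
  rw [b.sum_sq_norm_apply_eq_sum_sq_norm_adjoint f (stdOrthonormalBasis 𝕜 F),
    b'.sum_sq_norm_apply_eq_sum_sq_norm_adjoint f (stdOrthonormalBasis 𝕜 F)]

theorem sum_sum_sq_norm_apply₂_eq (m : E →ₗ[𝕜] F →ₗ[𝕜] G)
    (b : OrthonormalBasis ι 𝕜 E) (b' : OrthonormalBasis ι' 𝕜 E)
    (c : OrthonormalBasis κ 𝕜 F) (c' : OrthonormalBasis κ' 𝕜 F) :
    ∑ i, ∑ j, ‖m (b i) (c j)‖ ^ 2 = ∑ i, ∑ j, ‖m (b' i) (c' j)‖ ^ 2 :=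
  calc ∑ i, ∑ j, ‖m (b i) (c j)‖ ^ 2 = ∑ j, ∑ i, ‖m.flip (c' j) (b i)‖ ^ 2 := by
        simp only [c.sum_sq_norm_apply_eq (m _) c']
        exact Finset.sum_comm
    _ = ∑ i, ∑ j, ‖m (b' i) (c' j)‖ ^ 2 := by
        simp only [b.sum_sq_norm_apply_eq (m.flip _) b']
        exact Finset.sum_comm

end OrthonormalBasis

open Quaternion

noncomputable def Quaternion.orthonormalBasisOneIJK : OrthonormalBasis (Fin 4) ℝ ℍ[ℝ] :=
  (EuclideanSpace.basisFun (Fin 4) ℝ).map linearIsometryEquivTuple.symm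

theorem Quaternion.orthonormalBasisOneIJK_apply (i : Fin 4) :
    orthonormalBasisOneIJK i = ![⟨1, 0, 0, 0⟩, ⟨0, 1, 0, 0⟩, ⟨0, 0, 1, 0⟩, ⟨0, 0, 0, 1⟩] i := by
  fin_cases i <;> ext <;> simp [orthonormalBasisOneIJK]

theorem Quaternion.sum_sum_sq_norm_commutator_orthonormalBasisOneIJK :
    ∑ i, ∑ j, ‖orthonormalBasisOneIJK j * orthonormalBasisOneIJK i -
      orthonormalBasisOneIJK i * orthonormalBasisOneIJK j‖ ^ 2 = 24 := by
  simp [Fin.sum_univ_four, orthonormalBasisOneIJK_apply, sq, ← normSq_eq_norm_mul_self,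
    normSq_def']
  norm_num

section CayleyDickson

variable (δ : ℝ) (c : ℝ) (p p' q q' : ℍ[ℝ] × ℍ[ℝ])

theorem cdMul_add_left : cdMul δ (p + p') q = cdMul δ p q + cdMul δ p' q := by
  ext : 1 <;> simp only [cdMul, Prod.fst_add, Prod.snd_add, add_mul, mul_add, smul_add, smul_sub]
    <;> abel

theorem cdMul_add_right : cdMul δ p (q + q') = cdMul δ p q + cdMul δ p q' := by
  ext : 1 <;> simp only [cdMul, Prod.fst_add, Prod.snd_add, add_mul, mul_add, smul_add, smul_sub,
    star_add] <;> abel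

theorem cdMul_smul_left : cdMul δ (c • p) q = c • cdMul δ p q := by
  ext : 1 <;> simp [cdMul, smul_sub, smul_add, smul_comm c]

theorem cdMul_smul_right : cdMul δ p (c • q) = c • cdMul δ p q := by
  ext : 1 <;> simp [cdMul, smul_sub, smul_add, smul_comm c]

theorem cdMul_one_left : cdMul δ (1, 0) p = p := by
  simp [cdMul]

theorem cdMul_one_right : cdMul δ p (1, 0) = p := by
  simp [cdMul]

theorem cdMul_self : cdMul δ p p = (2 * p.1.re) • p - ‖WithLp.toLp 2 p‖ ^ 2 • (1, 0) := by
  rw [WithLp.prod_norm_sq_eq_of_L2]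
  ext <;> simp [cdMul, sq, ← normSq_eq_norm_mul_self, normSq_def'] <;> ring

theorem cdMul_neg_snd :
    cdMul δ (p.1, -p.2) (q.1, -q.2) = ((cdMul (-δ) p q).1, -(cdMul (-δ) p q).2) := by
  simp only [cdMul, star_neg, mul_neg, neg_mul, neg_neg, smul_sub, neg_div, neg_smul, neg_add_rev,
    sub_neg_eq_add, Prod.mk.injEq, true_and]
  abel

end CayleyDickson

noncomputable def cdMulₗ (δ : ℝ) :
    WithLp 2 (ℍ[ℝ] × ℍ[ℝ]) →ₗ[ℝ] WithLp 2 (ℍ[ℝ] × ℍ[ℝ]) →ₗ[ℝ] WithLp 2 (ℍ[ℝ] × ℍ[ℝ]) :=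
  LinearMap.mk₂ ℝ (fun p q ↦ WithLp.toLp 2 (cdMul δ p.ofLp q.ofLp))
    (fun _ _ _ ↦ by simp [cdMul_add_left])
    (fun _ _ _ ↦ by simp [cdMul_smul_left])
    (fun _ _ _ ↦ by simp [cdMul_add_right])
    (fun _ _ _ ↦ by simp [cdMul_smul_right])

noncomputable def cdOrthonormalBasis :
    OrthonormalBasis (Fin 4 ⊕ Fin 4) ℝ (WithLp 2 (ℍ[ℝ] × ℍ[ℝ])) :=
  orthonormalBasisOneIJK.prod orthonormalBasisOneIJK

theorem cdOrthonormalBasis_inl (i : Fin 4) :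
    cdOrthonormalBasis (.inl i) = WithLp.toLp 2 (orthonormalBasisOneIJK i, 0) := by
  simp [cdOrthonormalBasis]

theorem cdOrthonormalBasis_inr (i : Fin 4) :
    cdOrthonormalBasis (.inr i) = WithLp.toLp 2 (0, orthonormalBasisOneIJK i) := by
  simp [cdOrthonormalBasis]

theorem sum_sum_sq_norm_cdMulₗ (δ : ℝ) :
    ∑ i, ∑ j, ‖cdMulₗ δ (cdOrthonormalBasis i) (cdOrthonormalBasis j)‖ ^ 2 = 64 + 6 * δ ^ 2 := by
  simp [Fintype.sum_sum_type, cdOrthonormalBasis_inl, cdOrthonormalBasis_inr, cdMulₗ, cdMul,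
    WithLp.prod_norm_sq_eq_of_L2, norm_mul, norm_smul, mul_pow, ← Finset.mul_sum,
    Finset.sum_add_distrib, sum_sum_sq_norm_commutator_orthonormalBasisOneIJK, div_pow, sq_abs]
  ring

section Isomorphism

variable {δ δ' : ℝ} (e : (ℍ[ℝ] × ℍ[ℝ]) ≃ₗ[ℝ] (ℍ[ℝ] × ℍ[ℝ]))
  (he : ∀ p q, e (cdMul δ' p q) = cdMul δ (e p) (e q))
include he

theorem map_one_zero_of_cdMul : e (1, 0) = (1, 0) :=
  calc e (1, 0) = cdMul δ (e (1, 0)) (e (e.symm (1, 0))) := by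
        rw [e.apply_symm_apply, cdMul_one_right]
    _ = (1, 0) := by rw [← he, cdMul_one_left, e.apply_symm_apply]

theorem norm_toLp_map_of_cdMul (p : ℍ[ℝ] × ℍ[ℝ]) :
    ‖WithLp.toLp 2 (e p)‖ = ‖WithLp.toLp 2 p‖ := by
  have hsq := he p p
  rw [cdMul_self, cdMul_self, map_sub, map_smul, map_smul, map_one_zero_of_cdMul e he] at hsq
  have hcoeff : (2 * p.1.re - 2 * (e p).1.re) • e p =
      (‖WithLp.toLp 2 p‖ ^ 2 - ‖WithLp.toLp 2 (e p)‖ ^ 2) • ((1, 0) : ℍ[ℝ] × ℍ[ℝ]) := by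
    rw [sub_smul, sub_smul, sub_eq_sub_iff_sub_eq_sub, hsq]
  by_cases hre : 2 * p.1.re - 2 * (e p).1.re = 0
  · rw [hre, zero_smul, eq_comm, smul_eq_zero] at hcoeff
    have hne : ((1, 0) : ℍ[ℝ] × ℍ[ℝ]) ≠ 0 := by simp [Prod.ext_iff]
    rw [← sq_eq_sq₀ (norm_nonneg _) (norm_nonneg _)]
    linarith [hcoeff.resolve_right hne]
  · -- otherwise `e p` is a multiple of `(1, 0)`, hence fixed by `e`
    set a := (2 * p.1.re - 2 * (e p).1.re)⁻¹ * (‖WithLp.toLp 2 p‖ ^ 2 - ‖WithLp.toLp 2 (e p)‖ ^ 2)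
    have hep : e p = a • (1, 0) := by
      rw [mul_smul, ← hcoeff, smul_smul, inv_mul_cancel₀ hre, one_smul]
    have hp : p = e p := e.injective (by rw [hep, map_smul, map_one_zero_of_cdMul e he])
    rw [← hp, sub_self] at hre
    exact absurd rfl hre

theorem sq_eq_sq_of_cdMul : δ' ^ 2 = δ ^ 2 := by
  let E : WithLp 2 (ℍ[ℝ] × ℍ[ℝ]) ≃ₗᵢ[ℝ] WithLp 2 (ℍ[ℝ] × ℍ[ℝ]) :=
    { (WithLp.linearEquiv 2 ℝ _).trans (e.trans (WithLp.linearEquiv 2 ℝ _).symm) with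
      norm_map' := fun p ↦ norm_toLp_map_of_cdMul e he p.ofLp }
  have hE : ∀ p q, E (cdMulₗ δ' p q) = cdMulₗ δ (E p) (E q) :=
    fun p q ↦ congrArg (WithLp.toLp 2) (he p.ofLp q.ofLp)
  let b := cdOrthonormalBasis
  have key : 64 + 6 * δ' ^ 2 = 64 + 6 * δ ^ 2 :=
    calc 64 + 6 * δ' ^ 2 = ∑ i, ∑ j, ‖cdMulₗ δ' (b i) (b j)‖ ^ 2 := (sum_sum_sq_norm_cdMulₗ δ').symm
      _ = ∑ i, ∑ j, ‖cdMulₗ δ ((b.map E) i) ((b.map E) j)‖ ^ 2 := by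
        simp only [OrthonormalBasis.map_apply, ← hE, LinearIsometryEquiv.norm_map]
      _ = ∑ i, ∑ j, ‖cdMulₗ δ (b i) (b j)‖ ^ 2 := (b.map E).sum_sum_sq_norm_apply₂_eq _ b _ b
      _ = 64 + 6 * δ ^ 2 := sum_sum_sq_norm_cdMulₗ δ
  linarith

end Isomorphism

theorem cdExtension_iso_iff (δ δ' : ℝ) :
    (∃ e : (Quaternion ℝ × Quaternion ℝ) ≃ₗ[ℝ] (Quaternion ℝ × Quaternion ℝ),
      ∀ p q : Quaternion ℝ × Quaternion ℝ, e (cdMul δ' p q) = cdMul δ (e p) (e q)) ↔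
    (δ' = δ ∨ δ' = -δ) := by
  constructor
  · rintro ⟨e, he⟩
    exact sq_eq_sq_iff_eq_or_eq_neg.mp (sq_eq_sq_of_cdMul e he)
  · rintro (rfl | rfl)
    · exact ⟨LinearEquiv.refl ℝ _, fun _ _ ↦ rfl⟩
    · refine ⟨(LinearEquiv.refl ℝ ℍ[ℝ]).prodCongr (LinearEquiv.neg ℝ), fun p q ↦ ?_⟩
      exact (cdMul_neg_snd δ p q).symm
end
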